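/- arXiv:0705.2345 — 8 statements merged into one kernel-verified Lean document; each statement's English description precedes it below -/
import Mathlib

section
/- Let $R=\infty$, i.e. suppose $y:\mathbb{C}\to\mathbb{C}$ is an entire function with $y(0)=0$ and $y'(0)=1$, and let $z_1,\dots,z_k\in\mathbb{C}$ be fixed. If $\prod_{i=1}^k(z-z_i)=\prod_{i=1}^k(y(z)-y(z_i))$ for all $z\in\mathbb{C}$, then $y(z)=z$ for all $z$. -/
/-- Entire case: if `y` is entire, `y 0 = 0`, `y' 0 = 1`, and
`∏ (z - zᵢ) = ∏ (y z - y zᵢ)` everywhere, then `y = id`. -/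
theorem entire_uniqueness (k : ℕ) (hk : 1 ≤ k) (y : ℂ → ℂ)
    (hy : Differentiable ℂ y) (hy0 : y 0 = 0) (hy1 : deriv y 0 = 1)
    (z : Fin k → ℂ)
    (heq : ∀ w : ℂ, ∏ i, (w - z i) = ∏ i, (y w - y (z i))) :
    ∀ w : ℂ, y w = w := by
  -- a common bound M for all ‖y (z i)‖ and ‖z i‖
  obtain ⟨M, hM⟩ := (Finset.univ.image fun i => ‖y (z i)‖ ⊔ ‖z i‖).exists_le
  have hM' : ∀ i : Fin k, ‖y (z i)‖ ≤ M ∧ ‖z i‖ ≤ M := by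
    intro i
    have := hM _ (Finset.mem_image_of_mem _ (Finset.mem_univ i))
    constructor <;> [exact le_trans (le_max_left _ _) this;
      exact le_trans (le_max_right _ _) this]
  have hM0 : 0 ≤ M := le_trans (norm_nonneg _) (hM' ⟨0, hk⟩).2
  -- linear growth bound for y
  have hgrow : ∀ w : ℂ, ‖y w‖ ≤ ‖w‖ + 2 * M := by
    intro w
    by_cases hc : ‖y w‖ ≤ M
    · have : (0:ℝ) ≤ ‖w‖ := norm_nonneg _
      linarith
    push_neg at hc
    have ha : (0:ℝ) ≤ ‖y w‖ - M := by linarith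
    have hb : (0:ℝ) ≤ ‖w‖ + M := by positivity
    have h1 : (‖y w‖ - M) ^ k ≤ ∏ i, ‖y w - y (z i)‖ := by
      have : (‖y w‖ - M) ^ k = ∏ _i : Fin k, (‖y w‖ - M) := by simp
      rw [this]
      refine Finset.prod_le_prod (fun i _ => ha) fun i _ => ?_
      calc ‖y w‖ - M ≤ ‖y w‖ - ‖y (z i)‖ := by linarith [(hM' i).1]
        _ ≤ ‖y w - y (z i)‖ := norm_sub_norm_le _ _
    have h2 : ∏ i, ‖w - z i‖ ≤ (‖w‖ + M) ^ k := by
      have : (‖w‖ + M) ^ k = ∏ _i : Fin k, (‖w‖ + M) := by simp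
      rw [this]
      refine Finset.prod_le_prod (fun i _ => norm_nonneg _) fun i _ => ?_
      calc ‖w - z i‖ ≤ ‖w‖ + ‖z i‖ := norm_sub_le _ _
        _ ≤ ‖w‖ + M := by linarith [(hM' i).2]
    have h3 : ∏ i, ‖y w - y (z i)‖ = ∏ i, ‖w - z i‖ := by
      rw [← norm_prod, ← norm_prod, ← heq w]
    have hk' : (‖y w‖ - M) ^ k ≤ (‖w‖ + M) ^ k := by
      rw [← h3] at h2; exact le_trans h1 h2
    have := (pow_le_pow_iff_left₀ ha hb (by omega)).mp hk'
    linarith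
  -- dslope y 0 is entire
  set g : ℂ → ℂ := dslope y 0 with hg
  have hgd : Differentiable ℂ g := by
    rw [← differentiableOn_univ]
    exact (Complex.differentiableOn_dslope Filter.univ_mem).mpr
      hy.differentiableOn
  -- g is bounded
  obtain ⟨B, hB⟩ := (isCompact_closedBall (0:ℂ) 1).exists_bound_of_continuousOn
    hgd.continuous.continuousOn
  have hgb : ∀ w : ℂ, ‖g w‖ ≤ max B (1 + 2 * M) := by
    intro w
    rcases le_or_gt ‖w‖ 1 with h | h
    · exact le_trans (hB w (by simpa [Metric.mem_closedBall, dist_zero_right] using h))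
        (le_max_left _ _)
    · have hw0 : w ≠ 0 := by
        intro h0; rw [h0] at h; simp at h; linarith
      have hgw : g w = w⁻¹ * y w := by
        rw [hg, dslope, Function.update_of_ne hw0, slope_def_field, div_eq_inv_mul,
          hy0, sub_zero, sub_zero]
      rw [hgw, norm_mul, norm_inv]
      have h1 : ‖w‖⁻¹ * ‖y w‖ ≤ ‖w‖⁻¹ * (‖w‖ + 2 * M) := by
        apply mul_le_mul_of_nonneg_left (hgrow w) (by positivity)
      refine le_trans h1 (le_trans ?_ (le_max_right _ _))
      rw [mul_add, inv_mul_cancel₀ (by positivity)]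
      have : ‖w‖⁻¹ * (2 * M) ≤ 1 * (2 * M) := by
        apply mul_le_mul_of_nonneg_right _ (by positivity)
        rw [inv_le_one_iff₀]; right; linarith
      linarith
  -- Liouville: g is constant, equal to g 0 = deriv y 0 = 1
  have hconst : ∀ w : ℂ, g w = 1 := by
    intro w
    have hb : Bornology.IsBounded (Set.range g) := by
      rw [Metric.isBounded_iff_subset_closedBall 0]
      refine ⟨max B (1 + 2 * M), ?_⟩
      rintro x ⟨w, rfl⟩
      simpa [Metric.mem_closedBall, dist_zero_right] using hgb w
    have h := hgd.apply_eq_apply_of_bounded hb w 0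
    rw [hg] at h ⊢
    rwa [dslope_same, hy1] at h
  intro w
  have h2 := sub_smul_dslope y 0 w
  rw [show dslope y 0 = g from hg.symm, hconst w, hy0, sub_zero, sub_zero,
    smul_eq_mul, mul_one] at h2
  exact h2.symm
end

section
/- Let $P$ and $Q$ be complex polynomials of the same degree $k\ge 1$, let $D=\{z:|z|<R\}$ contain all roots $z_1,\dots,z_k$ of $P$ (listed with multiplicity), and let $y$ be analytic on $D$ with $P(z)=Q(y(z))$ for all $z\in D$. If every root of $Q$ lies in $y(D)$, then for all $i$, $y'(z_i)\ne 0$, and for all $i,j$: $y(z_i)=y(z_j)$ if and only if $z_i=z_j$. -/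
/-!
Near a root `ζ` of `P`, the identity `P = Q ∘ y` gives
`mult_P ζ = mult_Q (y ζ) · ord_ζ (y - y ζ)`. Since `y` maps the roots of `P` onto those of `Q`,
summing over the distinct roots of `P` yields
`deg P = ∑ mult_Q (y ζ) · ord_ζ (y - y ζ) ≥ ∑ mult_Q (y ζ) ≥ ∑_{Q w = 0} mult_Q w = deg Q`.
Equality of the degrees forces every order to be `1`, i.e. `y' ζ ≠ 0`, and `y` to be injective
on the roots of `P`.
-/

open Polynomial

theorem Finset.injOn_of_sum_comp_le_sum_image {ι κ : Type*} [DecidableEq κ] {s : Finset ι}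
    {g : ι → κ} {f : κ → ℕ} (hf : ∀ i ∈ s, f (g i) ≠ 0)
    (h : ∑ i ∈ s, f (g i) ≤ ∑ b ∈ s.image g, f b) : Set.InjOn g s := by
  classical
  intro a ha b hb hab
  by_contra hne
  have himage : s.image g = (s.erase b).image g := by
    ext c
    simp only [Finset.mem_image, Finset.mem_erase]
    constructor
    · rintro ⟨d, hd, rfl⟩
      by_cases hdb : d = b
      · exact ⟨a, ⟨hne, ha⟩, hdb ▸ hab⟩
      · exact ⟨d, ⟨hdb, hd⟩, rfl⟩
    · rintro ⟨d, ⟨-, hd⟩, rfl⟩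
      exact ⟨d, hd, rfl⟩
  rw [himage] at h
  have := calc ∑ i ∈ s, f (g i)
      ≤ ∑ i ∈ s.erase b, f (g i) :=
        h.trans (Finset.sum_image_le_of_nonneg fun _ _ ↦ Nat.zero_le _)
    _ < ∑ i ∈ s, f (g i) := Finset.sum_erase_lt_of_pos hb (Nat.pos_of_ne_zero (hf b hb))
  exact lt_irrefl _ this

section

variable {𝕜 : Type*} [NontriviallyNormedField 𝕜] {U : Set 𝕜} {y : 𝕜 → 𝕜} {P Q : 𝕜[X]}

theorem AnalyticAt.deriv_ne_zero_of_analyticOrderNatAt_sub_eq_one [CompleteSpace 𝕜] [CharZero 𝕜]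
    {f : 𝕜 → 𝕜} {x : 𝕜} (hf : AnalyticAt 𝕜 f x) (h : analyticOrderNatAt (f · - f x) x = 1) :
    deriv f x ≠ 0 := by
  have h1 : analyticOrderAt (f · - f x) x = 1 := by
    rw [← Nat.cast_analyticOrderNatAt (fun htop ↦ by simp [analyticOrderNatAt, htop] at h), h,
      Nat.cast_one]
  have h0 : analyticOrderAt (deriv f) x = 0 := by
    simpa [h1] using hf.analyticOrderAt_deriv_add_one
  exact hf.deriv.analyticOrderAt_eq_zero.mp h0

theorem Polynomial.analyticOrderAt_eval {p : 𝕜[X]} (hp : p ≠ 0) (a : 𝕜) :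
    analyticOrderAt (eval · p) a = p.rootMultiplicity a := by
  rw [(AnalyticOnNhd.eval_polynomial p a (Set.mem_univ a)).analyticOrderAt_eq_natCast]
  refine ⟨(eval · (p /ₘ (X - C a) ^ p.rootMultiplicity a)),
    AnalyticOnNhd.eval_polynomial _ a (Set.mem_univ a),
    eval_divByMonic_pow_rootMultiplicity_ne_zero a hp, Filter.Eventually.of_forall fun w ↦ ?_⟩
  conv_lhs => rw [← p.pow_mul_divByMonic_rootMultiplicity_eq a]
  simp

theorem Polynomial.analyticOrderAt_eval_comp {p : 𝕜[X]} (hp : p ≠ 0) {f : 𝕜 → 𝕜} {a : 𝕜}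
    (hf : AnalyticAt 𝕜 f a) :
    analyticOrderAt (fun w ↦ eval (f w) p) a =
      p.rootMultiplicity (f a) * analyticOrderAt (f · - f a) a := by
  rw [← p.analyticOrderAt_eval hp]
  exact (AnalyticOnNhd.eval_polynomial p (f a) (Set.mem_univ _)).analyticOrderAt_comp hf

theorem rootMultiplicity_eq_mul_analyticOrderNatAt (hU : IsOpen U) (hy : AnalyticOnNhd 𝕜 y U)
    (heq : Set.EqOn (eval · P) (fun w ↦ eval (y w) Q) U) (hP : P ≠ 0) (hQ : Q ≠ 0) {ζ : 𝕜}
    (hζ : ζ ∈ U) :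
    P.rootMultiplicity ζ = Q.rootMultiplicity (y ζ) * analyticOrderNatAt (y · - y ζ) ζ := by
  have h := (P.analyticOrderAt_eval hP ζ).symm.trans <|
    (analyticOrderAt_congr (Filter.eventuallyEq_of_mem (hU.mem_nhds hζ) heq)).trans <|
      Q.analyticOrderAt_eval_comp hQ (hy ζ hζ)
  simpa [analyticOrderNatAt] using congrArg ENat.toNat h

theorem roots_toFinset_eq_image_roots_toFinset [DecidableEq 𝕜]
    (heq : Set.EqOn (eval · P) (fun w ↦ eval (y w) Q) U) (hP : P ≠ 0) (hQ : Q ≠ 0)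
    (hPU : ∀ ζ, P.IsRoot ζ → ζ ∈ U) (hQU : ∀ w, Q.IsRoot w → w ∈ y '' U) :
    Q.roots.toFinset = P.roots.toFinset.image y := by
  ext w
  simp only [Multiset.mem_toFinset, Finset.mem_image, mem_roots hP, mem_roots hQ]
  constructor
  · intro hw
    obtain ⟨ζ, hζ, rfl⟩ := hQU w hw
    exact ⟨ζ, (heq hζ).trans hw, rfl⟩
  · rintro ⟨ζ, hζ, rfl⟩
    exact (heq (hPU ζ hζ)).symm.trans hζ

theorem Polynomial.sum_rootMultiplicity_roots_toFinset [DecidableEq 𝕜] (p : 𝕜[X]) :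
    ∑ a ∈ p.roots.toFinset, p.rootMultiplicity a = p.roots.card := by
  simpa only [count_roots] using p.roots.toFinset_sum_count_eq

theorem analyticOrderNatAt_eq_one_and_injOn_roots [IsAlgClosed 𝕜] (hU : IsOpen U)
    (hy : AnalyticOnNhd 𝕜 y U) (heq : Set.EqOn (eval · P) (fun w ↦ eval (y w) Q) U)
    (hP : P ≠ 0) (hQ : Q ≠ 0) (hdeg : P.natDegree ≤ Q.natDegree)
    (hPU : ∀ ζ, P.IsRoot ζ → ζ ∈ U) (hQU : ∀ w, Q.IsRoot w → w ∈ y '' U) :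
    (∀ ζ, P.IsRoot ζ → analyticOrderNatAt (y · - y ζ) ζ = 1) ∧ Set.InjOn y {ζ | P.IsRoot ζ} := by
  classical
  set T := P.roots.toFinset
  set μ := fun w ↦ Q.rootMultiplicity w
  set ν := fun ζ ↦ analyticOrderNatAt (y · - y ζ) ζ
  have hT : ∀ ζ, ζ ∈ T ↔ P.IsRoot ζ := by simp [T, mem_roots hP]
  have hmult : ∀ ζ ∈ T, P.rootMultiplicity ζ = μ (y ζ) * ν ζ := fun ζ hζ ↦
    rootMultiplicity_eq_mul_analyticOrderNatAt hU hy heq hP hQ (hPU ζ ((hT ζ).mp hζ))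
  have hmult_ne : ∀ ζ ∈ T, μ (y ζ) * ν ζ ≠ 0 := fun ζ hζ ↦ by
    rw [← hmult ζ hζ]
    exact ((rootMultiplicity_pos hP).mpr ((hT ζ).mp hζ)).ne'
  have hμ : ∀ ζ ∈ T, μ (y ζ) ≠ 0 := fun ζ hζ ↦ left_ne_zero_of_mul (hmult_ne ζ hζ)
  have hle : ∀ ζ ∈ T, μ (y ζ) ≤ μ (y ζ) * ν ζ := fun ζ hζ ↦
    Nat.le_mul_of_pos_right _ (Nat.pos_of_ne_zero (right_ne_zero_of_mul (hmult_ne ζ hζ)))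
  have hcount : ∑ ζ ∈ T, μ (y ζ) * ν ζ ≤ ∑ w ∈ T.image y, μ w := calc
    _ = ∑ ζ ∈ T, P.rootMultiplicity ζ := (Finset.sum_congr rfl hmult).symm
    _ = P.roots.card := P.sum_rootMultiplicity_roots_toFinset
    _ ≤ Q.natDegree := (card_roots' P).trans hdeg
    _ = ∑ w ∈ Q.roots.toFinset, μ w :=
      IsAlgClosed.card_roots_eq_natDegree.symm.trans Q.sum_rootMultiplicity_roots_toFinset.symm
    _ = ∑ w ∈ T.image y, μ w := by
      rw [roots_toFinset_eq_image_roots_toFinset heq hP hQ hPU hQU]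
  have hsum_le : ∑ ζ ∈ T, μ (y ζ) ≤ ∑ w ∈ T.image y, μ w :=
    (Finset.sum_le_sum hle).trans hcount
  refine ⟨fun ζ hζ ↦ ?_, fun a ha b hb hab ↦ ?_⟩
  · have hsum_eq : ∑ ζ ∈ T, μ (y ζ) = ∑ ζ ∈ T, μ (y ζ) * ν ζ :=
      le_antisymm (Finset.sum_le_sum hle) <|
        hcount.trans (Finset.sum_image_le_of_nonneg fun _ _ ↦ Nat.zero_le _)
    have hζT := (hT ζ).mpr hζ
    exact (mul_eq_left₀ (hμ ζ hζT)).mp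
      ((Finset.sum_eq_sum_iff_of_le hle).mp hsum_eq ζ hζT).symm
  · exact Finset.injOn_of_sum_comp_le_sum_image hμ hsum_le ((hT a).mpr ha) ((hT b).mpr hb) hab

end

theorem thmA_forward_general (R : ℝ) (k : ℕ) (hk : 1 ≤ k)
    (P Q : Polynomial ℂ) (hPdeg : P.natDegree = k) (hQdeg : Q.natDegree = k)
    (z : Fin k → ℂ) (hz : ∀ i, z i ∈ Metric.ball (0 : ℂ) R)
    (hPfact : P = Polynomial.C P.leadingCoeff *
      ∏ i, (Polynomial.X - Polynomial.C (z i)))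
    (y : ℂ → ℂ) (hy : DifferentiableOn ℂ y (Metric.ball (0 : ℂ) R))
    (heq : ∀ w ∈ Metric.ball (0 : ℂ) R, P.eval w = Q.eval (y w))
    (hroots : ∀ w : ℂ, Q.eval w = 0 → w ∈ y '' Metric.ball (0 : ℂ) R) :
    (∀ i, deriv y (z i) ≠ 0) ∧ (∀ i j, y (z i) = y (z j) ↔ z i = z j) := by
  have hP : P ≠ 0 := ne_zero_of_natDegree_gt (hPdeg ▸ hk)
  have hQ : Q ≠ 0 := ne_zero_of_natDegree_gt (hQdeg ▸ hk)
  have hProot : ∀ ζ, P.IsRoot ζ ↔ ∃ i, ζ = z i := fun ζ ↦ by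
    conv_lhs => rw [hPfact]
    simp [eval_prod, Finset.prod_eq_zero_iff, sub_eq_zero, leadingCoeff_ne_zero.mpr hP]
  have hyU := hy.analyticOnNhd Metric.isOpen_ball
  obtain ⟨horder, hinj⟩ := analyticOrderNatAt_eq_one_and_injOn_roots Metric.isOpen_ball hyU heq
    hP hQ (hPdeg.trans hQdeg.symm).le
    (fun ζ hζ ↦ by obtain ⟨i, rfl⟩ := (hProot ζ).mp hζ; exact hz i) hroots
  have hzroot : ∀ i, P.IsRoot (z i) := fun i ↦ (hProot (z i)).mpr ⟨i, rfl⟩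
  exact ⟨fun i ↦ (hyU _ (hz i)).deriv_ne_zero_of_analyticOrderNatAt_sub_eq_one
      (horder _ (hzroot i)),
    fun i j ↦ ⟨fun h ↦ hinj (hzroot i) (hzroot j) h, congrArg y⟩⟩

/-- Theorem A, forward direction: if every root of `Q` lies in `y(D)`, then
`y'(zᵢ) ≠ 0` for all `i` and `y(zᵢ) = y(zⱼ) ↔ zᵢ = zⱼ`. -/
theorem thmA_forward (R : ℝ) (hR : 0 < R) (k : ℕ) (hk : 1 ≤ k)
    (P Q : Polynomial ℂ) (hPdeg : P.natDegree = k) (hQdeg : Q.natDegree = k)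
    (z : Fin k → ℂ) (hz : ∀ i, z i ∈ Metric.ball (0 : ℂ) R)
    (hPfact : P = Polynomial.C P.leadingCoeff *
      ∏ i, (Polynomial.X - Polynomial.C (z i)))
    (y : ℂ → ℂ) (hy : DifferentiableOn ℂ y (Metric.ball (0 : ℂ) R))
    (heq : ∀ w ∈ Metric.ball (0 : ℂ) R, P.eval w = Q.eval (y w))
    (hroots : ∀ w : ℂ, Q.eval w = 0 → w ∈ y '' Metric.ball (0 : ℂ) R) :
    (∀ i, deriv y (z i) ≠ 0) ∧ (∀ i j, y (z i) = y (z j) ↔ z i = z j) :=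
  thmA_forward_general R k hk P Q hPdeg hQdeg z hz hPfact y hy heq hroots
end

section
/- Let $P$ and $Q$ be complex polynomials of the same degree $k\ge 1$, let $D=\{z:|z|<R\}$ contain all roots $z_1,\dots,z_k$ of $P$ (listed with multiplicity), and let $y$ be analytic on $D$ with $P(z)=Q(y(z))$ for all $z\in D$. If for all $i$, $y'(z_i)\ne 0$, and for all $i,j$, $y(z_i)=y(z_j)$ iff $z_i=z_j$, then every root of $Q$ lies in $y(D)$, and moreover there is a constant $q\in\mathbb{C}$ such that $Q(y)=q\cdot\prod_{i=1}^k(y-y(z_i))$. -/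
open Polynomial Metric

/-- Key analytic lemma: matching root multiplicities. -/
lemma thmA_key (R : ℝ) (y : ℂ → ℂ) (hy : DifferentiableOn ℂ y (Metric.ball (0 : ℂ) R))
    (P Q : ℂ[X]) (hP : P ≠ 0) (hQ : Q ≠ 0) (z0 : ℂ) (hz0 : z0 ∈ Metric.ball (0 : ℂ) R)
    (heq : ∀ w ∈ Metric.ball (0 : ℂ) R, P.eval w = Q.eval (y w))
    (hd : deriv y z0 ≠ 0) :
    P.rootMultiplicity z0 = Q.rootMultiplicity (y z0) := by
  set m := P.rootMultiplicity z0 with hm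
  set n := Q.rootMultiplicity (y z0) with hn
  set c := y z0 with hc
  set A := P /ₘ (X - C z0) ^ m with hA
  set B := Q /ₘ (X - C c) ^ n with hB
  have hPA : ∀ w : ℂ, P.eval w = (w - z0) ^ m * A.eval w := by
    intro w
    conv_lhs => rw [← P.pow_mul_divByMonic_rootMultiplicity_eq z0]
    simp [← hm, ← hA]
  have hQB : ∀ w : ℂ, Q.eval w = (w - c) ^ n * B.eval w := by
    intro w
    conv_lhs => rw [← Q.pow_mul_divByMonic_rootMultiplicity_eq c]
    simp [← hn, ← hB]
  have hAz : A.eval z0 ≠ 0 := P.eval_divByMonic_pow_rootMultiplicity_ne_zero z0 hP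
  have hBc : B.eval c ≠ 0 := Q.eval_divByMonic_pow_rootMultiplicity_ne_zero c hQ
  have hball : Metric.ball (0 : ℂ) R ∈ nhds z0 := isOpen_ball.mem_nhds hz0
  have hyA : AnalyticAt ℂ y z0 := (hy.analyticOnNhd isOpen_ball) z0 hz0
  obtain ⟨p, hp⟩ := id hyA
  have hds : AnalyticAt ℂ (dslope y z0) z0 := ⟨p.fslope, hp.has_fpower_series_dslope_fslope⟩
  -- first witness
  have hW1 : ∃ g : ℂ → ℂ, AnalyticAt ℂ g z0 ∧ g z0 ≠ 0 ∧
      ∀ᶠ w in nhds z0, P.eval w = (w - z0) ^ m • g w := by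
    refine ⟨fun w => A.eval w, (A.differentiable).analyticAt z0, hAz, ?_⟩
    filter_upwards with w
    simpa [smul_eq_mul] using hPA w
  have hW2 : ∃ g : ℂ → ℂ, AnalyticAt ℂ g z0 ∧ g z0 ≠ 0 ∧
      ∀ᶠ w in nhds z0, P.eval w = (w - z0) ^ n • g w := by
    refine ⟨fun w => (dslope y z0 w) ^ n * B.eval (y w),
      ((hds.pow n).mul (((B.differentiable).analyticAt c).comp hyA)), ?_, ?_⟩
    · simp only [dslope_same]
      exact mul_ne_zero (pow_ne_zero _ hd) hBc
    · filter_upwards [hball] with w hw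
      have h1 : y w - c = (w - z0) * dslope y z0 w := by
        have := sub_smul_dslope y z0 w
        simpa [smul_eq_mul] using this.symm
      rw [heq w hw, hQB (y w), h1, smul_eq_mul, mul_pow]
      ring
  exact AnalyticAt.unique_eventuallyEq_pow_smul_nonzero hW1 hW2

/-- Theorem A, converse direction, together with the factorization of `Q`. -/
theorem thmA_converse (R : ℝ) (hR : 0 < R) (k : ℕ) (hk : 1 ≤ k)
    (P Q : Polynomial ℂ) (hPdeg : P.natDegree = k) (hQdeg : Q.natDegree = k)
    (z : Fin k → ℂ) (hz : ∀ i, z i ∈ Metric.ball (0 : ℂ) R)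
    (hPfact : P = Polynomial.C P.leadingCoeff *
      ∏ i, (Polynomial.X - Polynomial.C (z i)))
    (y : ℂ → ℂ) (hy : DifferentiableOn ℂ y (Metric.ball (0 : ℂ) R))
    (heq : ∀ w ∈ Metric.ball (0 : ℂ) R, P.eval w = Q.eval (y w))
    (hderiv : ∀ i, deriv y (z i) ≠ 0)
    (hinj : ∀ i j, y (z i) = y (z j) ↔ z i = z j) :
    (∀ w : ℂ, Q.eval w = 0 → w ∈ y '' Metric.ball (0 : ℂ) R) ∧
    ∃ q : ℂ, Q = Polynomial.C q * ∏ i, (Polynomial.X - Polynomial.C (y (z i))) := by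
  classical
  have hP0 : P ≠ 0 := fun h => by simp [h] at hPdeg; omega
  have hQ0 : Q ≠ 0 := fun h => by simp [h] at hQdeg; omega
  have hlc : P.leadingCoeff ≠ 0 := leadingCoeff_ne_zero.mpr hP0
  -- roots of P
  have hProots : P.roots = Multiset.map z Finset.univ.val := by
    rw [hPfact, roots_C_mul _ hlc, Finset.prod_eq_multiset_prod]
    have h2 : (Multiset.map (fun i => Polynomial.X - Polynomial.C (z i)) Finset.univ.val)
        = Multiset.map (fun a => Polynomial.X - Polynomial.C a)
          (Multiset.map z Finset.univ.val) := by
      rw [Multiset.map_map]; rfl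
    rw [h2]
    exact roots_multiset_prod_X_sub_C _
  -- the multiset of y-values
  set M : Multiset ℂ := Multiset.map (fun i => y (z i)) Finset.univ.val with hM
  have hcount : ∀ i : Fin k, Multiset.count (y (z i)) M = P.rootMultiplicity (z i) := by
    intro i
    rw [← Polynomial.count_roots, hProots, hM, Multiset.count_map, Multiset.count_map]
    congr 1
    refine Multiset.filter_congr ?_
    intro j _
    constructor
    · intro h; exact ((hinj j i).mp h.symm).symm
    · intro h; exact ((hinj j i).mpr h.symm).symm
  have hkey : ∀ i : Fin k, P.rootMultiplicity (z i) = Q.rootMultiplicity (y (z i)) :=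
    fun i => thmA_key R y hy P Q hP0 hQ0 (z i) (hz i) heq (hderiv i)
  have hMle : M ≤ Q.roots := by
    rw [Multiset.le_iff_count]
    intro a
    by_cases ha : a ∈ M
    · obtain ⟨i, _, rfl⟩ := Multiset.mem_map.mp ha
      rw [hcount i, hkey i, Polynomial.count_roots]
    · simp [Multiset.count_eq_zero_of_notMem ha]
  -- the product polynomial
  set T : Polynomial ℂ := ∏ i, (Polynomial.X - Polynomial.C (y (z i))) with hT
  have hTM : T = (M.map fun a => Polynomial.X - Polynomial.C a).prod := by
    rw [hT, hM, Finset.prod_eq_multiset_prod, Multiset.map_map]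
    rfl
  have hTdvd : T ∣ Q := by
    rw [hTM]
    exact dvd_trans (Multiset.prod_dvd_prod_of_le (Multiset.map_le_map hMle))
      (prod_multiset_X_sub_C_dvd Q)
  have hTmonic : T.Monic := monic_prod_of_monic _ _ fun i _ => monic_X_sub_C _
  have hTdeg : T.natDegree = k := by
    rw [hT, natDegree_prod _ _ fun i _ => X_sub_C_ne_zero _]
    simp
  obtain ⟨U, hU⟩ := hTdvd
  have hU0 : U ≠ 0 := fun h => hQ0 (by simp [hU, h])
  have hUdeg : U.natDegree = 0 := by
    have := natDegree_mul (hTmonic.ne_zero) hU0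
    rw [← hU, hQdeg, hTdeg] at this
    omega
  obtain ⟨u, rfl⟩ : ∃ u : ℂ, U = Polynomial.C u := ⟨U.coeff 0, eq_C_of_natDegree_eq_zero hUdeg⟩
  have hQfact : Q = Polynomial.C u * T := by rw [hU, mul_comm]
  have hu0 : u ≠ 0 := fun h => hQ0 (by simp [hQfact, h])
  refine ⟨?_, u, hQfact⟩
  intro w hw
  rw [hQfact] at hw
  simp only [eval_mul, eval_C, eval_prod, eval_sub, eval_X, mul_eq_zero] at hw
  rcases hw with h | h
  · exact absurd h hu0
  · rw [hT, eval_prod] at h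
    obtain ⟨i, _, hi⟩ := Finset.prod_eq_zero_iff.mp h
    simp only [eval_sub, eval_X, eval_C] at hi
    exact ⟨z i, hz i, (sub_eq_zero.mp hi).symm⟩
end

section
/- Let $R>0$, $k\ge 1$, and $z_1,\dots,z_k\in\mathbb{C}$ with $2\max_i|z_i|<R$. Let $f$ be analytic on $D=\{|z|<R\}$ with $f(0)=0$. If $\sum_{j=1}^k\frac{f(z)-f(z_j)}{z-z_j}=0$ for all $z\in D\setminus\{z_1,\dots,z_k\}$, then $f\equiv 0$ on $D$. -/
/-!
With `p = ∏ j (X - zⱼ)` and `pⱼ = p / (X - zⱼ)`, multiplying the hypothesis by `p(w)` gives the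
polynomial identity `p'(w) f(w) = T(w)` on the disk, where `T = ∑ j f(zⱼ) pⱼ` has degree
`< k = deg p`. By Gauss–Lucas every root of `p'` lies in the convex hull of the `zⱼ`, hence in the
disk, and continuity of `f` there forces each such root to be a root of `T` of at least the same
multiplicity. So `p' ∣ T`, and comparing degrees `f = T / p'` is constant, hence zero.
-/

open Polynomial Metric Finset

section Division

variable {𝕜 : Type*} [NontriviallyNormedField 𝕜] {U : Set 𝕜} {f : 𝕜 → 𝕜}

theorem exists_eq_X_sub_C_mul_of_forall_eval_mul_eq (hU : IsOpen U) (hf : ContinuousOn f U)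
    {a : 𝕜} (ha : a ∈ U) {S T : 𝕜[X]} (h : ∀ w ∈ U, ((X - C a) * S).eval w * f w = T.eval w) :
    ∃ T₁, T = (X - C a) * T₁ ∧ ∀ w ∈ U, S.eval w * f w = T₁.eval w := by
  obtain ⟨T₁, rfl⟩ : X - C a ∣ T := dvd_iff_isRoot.mpr (by simpa using (h a ha).symm)
  have hoff : ∀ w ∈ U, w ≠ a → S.eval w * f w = T₁.eval w := fun w hw hwa => by
    have := h w hw
    simp only [eval_mul, eval_sub, eval_X, eval_C, mul_assoc] at this
    exact mul_left_cancel₀ (sub_ne_zero.mpr hwa) this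
  refine ⟨T₁, rfl, fun w hw => ?_⟩
  obtain rfl | hwa := eq_or_ne w a
  · have hcont : ContinuousAt (fun x => S.eval x * f x) w :=
      S.continuousAt.mul (hf.continuousAt (hU.mem_nhds hw))
    refine ((hcont.eventuallyEq_nhds_iff_eventuallyEq_nhdsNE T₁.continuousAt).mp ?_).eq_of_nhds
    filter_upwards [mem_nhdsWithin_of_mem_nhds (hU.mem_nhds hw), self_mem_nhdsWithin]
      with x hx hxw using hoff x hx hxw
  · exact hoff w hw hwa

variable [IsAlgClosed 𝕜]

theorem exists_eq_mul_of_forall_eval_mul_eq (hU : IsOpen U) (hf : ContinuousOn f U) {S T : 𝕜[X]}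
    (hS : S ≠ 0) (hroots : ∀ a, S.IsRoot a → a ∈ U) (h : ∀ w ∈ U, S.eval w * f w = T.eval w) :
    ∃ Q, T = S * Q ∧ ∀ w ∈ U, f w = Q.eval w := by
  induction hn : S.natDegree generalizing S T with
  | zero =>
    obtain ⟨c, rfl⟩ := natDegree_eq_zero.mp hn
    have hc : c ≠ 0 := by rintro rfl; simp at hS
    refine ⟨C c⁻¹ * T, by rw [← mul_assoc, ← C_mul, mul_inv_cancel₀ hc, C_1, one_mul], ?_⟩
    intro w hw
    simp only [eval_mul, eval_C, ← h w hw, inv_mul_cancel_left₀ hc]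
  | succ n ih =>
    obtain ⟨a, ha⟩ := IsAlgClosed.exists_root S (natDegree_pos_iff_degree_pos.mp (by omega)).ne'
    obtain ⟨S₁, rfl⟩ := dvd_iff_isRoot.mpr ha
    have hS₁ : S₁ ≠ 0 := right_ne_zero_of_mul hS
    obtain ⟨T₁, rfl, h₁⟩ := exists_eq_X_sub_C_mul_of_forall_eval_mul_eq hU hf (hroots a ha) h
    obtain ⟨Q, rfl, hQ⟩ := ih hS₁ (fun b hb => hroots b (by simp [hb.eq_zero])) h₁
      (by rw [natDegree_mul (X_sub_C_ne_zero a) hS₁, natDegree_X_sub_C] at hn; omega)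
    exact ⟨Q, by ring, hQ⟩

end Division

section Nodes

variable {ι : Type*} [Fintype ι] (z : ι → ℂ)

noncomputable def nodePoly : ℂ[X] := ∏ i, (X - C (z i))

theorem monic_nodePoly : (nodePoly z).Monic :=
  monic_prod_of_monic _ _ fun i _ => monic_X_sub_C (z i)

theorem natDegree_nodePoly : (nodePoly z).natDegree = Fintype.card ι := by
  simp [nodePoly, natDegree_prod_of_monic _ _ (fun i _ => monic_X_sub_C (z i))]

theorem isRoot_nodePoly_iff {a : ℂ} : (nodePoly z).IsRoot a ↔ a ∈ Set.range z := by
  simp [nodePoly, eval_prod, prod_eq_zero_iff, sub_eq_zero, eq_comm (a := a)]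

theorem mem_convexHull_of_isRoot_derivative_nodePoly [Nonempty ι] {a : ℂ}
    (ha : (derivative (nodePoly z)).IsRoot a) : a ∈ convexHull ℝ (Set.range z) := by
  have hdeg : 0 < (nodePoly z).degree := by
    rw [degree_eq_natDegree (monic_nodePoly z).ne_zero, natDegree_nodePoly]
    exact_mod_cast Fintype.card_pos
  have hroots : (nodePoly z).rootSet ℂ = Set.range z := by
    ext b
    rw [mem_rootSet, coe_aeval_eq_eval, ← IsRoot.def, isRoot_nodePoly_iff]
    exact and_iff_right (monic_nodePoly z).ne_zero
  rw [← hroots]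
  refine rootSet_derivative_subset_convexHull_rootSet hdeg ?_
  rw [mem_rootSet, coe_aeval_eq_eval]
  exact ⟨derivative_ne_zero.mpr (by simp [natDegree_nodePoly]), ha⟩

variable [DecidableEq ι]

noncomputable def nodeCofactor (i : ι) : ℂ[X] := ∏ j ∈ univ.erase i, (X - C (z j))

theorem X_sub_C_mul_nodeCofactor (i : ι) : (X - C (z i)) * nodeCofactor z i = nodePoly z :=
  mul_prod_erase univ (fun j => X - C (z j)) (mem_univ i)

theorem derivative_nodePoly : derivative (nodePoly z) = ∑ i, nodeCofactor z i := by
  simp [nodePoly, nodeCofactor, derivative_prod_finset]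

theorem natDegree_nodeCofactor_le (i : ι) : (nodeCofactor z i).natDegree ≤ Fintype.card ι - 1 := by
  simp [nodeCofactor, natDegree_prod_of_monic _ _ (fun i _ => monic_X_sub_C (z i))]

-- At a node `w = z i` both sides vanish, the right one because `x / 0 = 0`.
theorem sub_mul_eval_nodeCofactor (g : ℂ → ℂ) (w : ℂ) (i : ι) :
    (g w - g (z i)) * (nodeCofactor z i).eval w
      = (nodePoly z).eval w * ((g w - g (z i)) / (w - z i)) := by
  obtain rfl | hw := eq_or_ne w (z i)
  · simp
  rw [← X_sub_C_mul_nodeCofactor z i, eval_mul]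
  simp only [eval_sub, eval_X, eval_C]
  field_simp [sub_ne_zero.mpr hw]

theorem natDegree_sum_C_mul_nodeCofactor_le (c : ι → ℂ) :
    (∑ i, C (c i) * nodeCofactor z i).natDegree ≤ Fintype.card ι - 1 :=
  natDegree_sum_le_of_forall_le _ _ fun i _ =>
    (natDegree_C_mul_le _ _).trans (natDegree_nodeCofactor_le z i)

theorem eval_derivative_nodePoly_mul_sub (g : ℂ → ℂ) (w : ℂ) :
    (derivative (nodePoly z)).eval w * g w - (∑ i, C (g (z i)) * nodeCofactor z i).eval w
      = (nodePoly z).eval w * ∑ i, (g w - g (z i)) / (w - z i) := by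
  simp only [derivative_nodePoly, eval_finsetSum, eval_mul, eval_C, sum_mul, mul_sum,
    ← sum_sub_distrib, ← sub_mul_eval_nodeCofactor]
  exact sum_congr rfl fun i _ => by ring

end Nodes

/-- Injectivity of the operator `L`: if `∑ⱼ (f z - f zⱼ)/(z - zⱼ) = 0` on the
disk (off the points `zⱼ`) and `f 0 = 0`, then `f ≡ 0`. -/
theorem L_injective (R : ℝ) (k : ℕ) (hk : 1 ≤ k) (z : Fin k → ℂ)
    (hz : ∀ i, 2 * ‖z i‖ < R)
    (f : ℂ → ℂ) (hf : DifferentiableOn ℂ f (Metric.ball (0 : ℂ) R))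
    (hf0 : f 0 = 0)
    (heq : ∀ w ∈ Metric.ball (0 : ℂ) R, (∀ j, w ≠ z j) →
      ∑ j, (f w - f (z j)) / (w - z j) = 0) :
    ∀ w ∈ Metric.ball (0 : ℂ) R, f w = 0 := by
  have : Nonempty (Fin k) := ⟨⟨0, hk⟩⟩
  have hzR : ∀ i, z i ∈ ball (0 : ℂ) R := fun i => by
    rw [mem_ball_zero_iff]
    linarith [hz i, norm_nonneg (z i)]
  have hS : derivative (nodePoly z) ≠ 0 :=
    derivative_ne_zero.mpr (by simp [natDegree_nodePoly]; omega)
  have hroots (a : ℂ) (ha : (derivative (nodePoly z)).IsRoot a) : a ∈ ball (0 : ℂ) R :=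
    (convex_ball _ _).convexHull_subset_iff.mpr (Set.range_subset_iff.mpr hzR)
      (mem_convexHull_of_isRoot_derivative_nodePoly z ha)
  have hid : ∀ w ∈ ball (0 : ℂ) R, (derivative (nodePoly z)).eval w * f w
      = (∑ i, C (f (z i)) * nodeCofactor z i).eval w := by
    intro w hw
    rw [← sub_eq_zero, eval_derivative_nodePoly_mul_sub]
    by_cases hwz : w ∈ Set.range z
    · rw [((isRoot_nodePoly_iff z).mpr hwz).eq_zero, zero_mul]
    · rw [heq w hw fun j hj => hwz ⟨j, hj.symm⟩, mul_zero]
  obtain ⟨Q, hTQ, hfQ⟩ :=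
    exists_eq_mul_of_forall_eval_mul_eq isOpen_ball hf.continuousOn hS hroots hid
  have hQ : Q.natDegree = 0 := by
    rcases eq_or_ne Q 0 with rfl | hQ
    · simp
    have := natDegree_sum_C_mul_nodeCofactor_le z (fun i => f (z i))
    rw [hTQ, natDegree_mul hS hQ, natDegree_derivative, natDegree_nodePoly, Fintype.card_fin]
      at this
    omega
  have h0 : (0 : ℂ) ∈ ball (0 : ℂ) R := mem_ball_self (nonempty_ball.mp ⟨_, hzR ⟨0, hk⟩⟩)
  intro w hw
  rw [hfQ w hw, eq_C_of_natDegree_eq_zero hQ, eval_C, coeff_zero_eq_eval_zero, ← hfQ 0 h0, hf0]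
end

section
/- Let $\mathcal{L}$ be as above with $2\rho<r<R$ and $\max_i|z_i|\le\rho$, and let $\mathcal{T}$ be its inverse. Then for every analytic $f$ on $D$ and every $r_0, r_1$ with $2\rho<r_0<r_1<R$, $\|\mathcal{T}f\|_{r_0}\le\frac{r_0}{(1-2\rho/r_1)(1-r_0/r_1)}\|f\|_{r_1}$. -/
/-!
Write `h w = ∑ cₙ wⁿ`. Expanding each divided difference
`(h w - h z) / (w - z) = ∑_p (∑_q c_{p+q+1} z^q) w^p` and averaging over the `z_j` shows that
`f = L h` has Taylor coefficients `f_p = ∑_q c_{p+q+1} s_q`, where `s_q` is the mean of the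
`z_j ^ q`. This Toeplitz system is inverted by the coefficients `β` of `1 / ∑ s_q X^q`:
`c_{n+1} = ∑_l f_{n+l} β_l`. The Cauchy estimate on the circle `|w| = r₁`, which avoids the `z_j`,
gives `|f_p| ≤ M r₁^{-p}`; together with `|β_l| ≤ (2ρ)^l` this yields
`|c_{n+1}| ≤ M r₁^{-n} / (1 - 2ρ/r₁)`, and `h(0) = 0` lets us sum `|c_{n+1}| r₀^{n+1}`.
-/

open Finset PowerSeries Metric

theorem PowerSeries.norm_coeff_inv_le {𝕜 : Type*} [NormedField 𝕜] {φ : 𝕜⟦X⟧}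
    (h0 : constantCoeff φ = 1) {ρ : ℝ} (hρ : 0 ≤ ρ) (hφ : ∀ n, ‖coeff n φ‖ ≤ ρ ^ n) (n : ℕ) :
    ‖coeff n φ⁻¹‖ ≤ (2 * ρ) ^ n := by
  induction n using Nat.strong_induction_on with
  | _ n ih =>
  rcases Nat.eq_zero_or_pos n with rfl | hn
  · simp [coeff_inv, h0]
  have hterm : ∀ x ∈ antidiagonal n, ‖if x.2 < n then coeff x.1 φ * coeff x.2 φ⁻¹ else 0‖ ≤
      if x.2 < n then ρ ^ n * 2 ^ x.2 else 0 := by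
    intro x hx
    split_ifs with hlt
    · rw [HasAntidiagonal.mem_antidiagonal] at hx
      calc ‖coeff x.1 φ * coeff x.2 φ⁻¹‖ ≤ ρ ^ x.1 * (2 * ρ) ^ x.2 := by
            rw [norm_mul]; exact mul_le_mul (hφ _) (ih _ hlt) (norm_nonneg _) (by positivity)
        _ = ρ ^ n * 2 ^ x.2 := by rw [← hx, mul_pow, pow_add]; ring
    · simp
  have hgeom : ∑ x ∈ antidiagonal n, (if x.2 < n then ρ ^ n * 2 ^ x.2 else 0) ≤ (2 * ρ) ^ n := by
    -- `∑_{j<n} ρ^n 2^j = (2^n - 1) ρ^n`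
    rw [← Nat.sum_antidiagonal_swap]
    simp only [Prod.snd_swap]
    rw [Nat.sum_antidiagonal_eq_sum_range_succ (fun i _ => if i < n then ρ ^ n * 2 ^ i else 0),
      sum_range_succ, if_neg (lt_irrefl n), add_zero,
      sum_congr rfl fun i hi => if_pos (mem_range.mp hi), ← mul_sum,
      geom_sum_eq (by norm_num : (2 : ℝ) ≠ 1), mul_pow]
    nlinarith [pow_nonneg hρ n]
  rw [coeff_inv, if_neg hn.ne', h0, inv_one, neg_one_mul, norm_neg]
  exact (norm_sum_le _ _).trans ((sum_le_sum hterm).trans hgeom)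

theorem PowerSeries.sum_antidiagonal_coeff_inv_mul_coeff {K : Type*} [Field K] {φ : K⟦X⟧}
    (h0 : constantCoeff φ ≠ 0) (m : ℕ) :
    ∑ x ∈ antidiagonal m, coeff x.1 φ⁻¹ * coeff x.2 φ = if m = 0 then 1 else 0 := by
  rw [← coeff_mul, PowerSeries.inv_mul_cancel φ h0, coeff_one]

section Rearrangement

variable {E : Type*} [NormedAddCommGroup E] [CompleteSpace E]

theorem Summable.hasSum_tsum_of_hasSum_sum_antidiagonal {F : ℕ × ℕ → E} (hF : Summable F)
    {S : E} (hS : HasSum (fun n => ∑ x ∈ antidiagonal n, F x) S) :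
    HasSum (fun p => ∑' q, F (p, q)) S := by
  have hdiag : HasSum (fun n => ∑ x ∈ antidiagonal n, F x) (∑' x, F x) :=
    (HasAntidiagonal.sigmaAntidiagonalEquivProd.hasSum_iff.mpr hF.hasSum).sigma
      fun n => (antidiagonal n).hasSum F
  rw [hS.unique hdiag]
  exact hF.hasSum.prod_fiberwise fun p => (hF.prod_factor p).hasSum

theorem summable_of_norm_le_mul_pow_mul_pow {F : ℕ × ℕ → E} {C a b : ℝ} (ha : 0 ≤ a)
    (ha1 : a < 1) (hb : 0 ≤ b) (hb1 : b < 1) (hF : ∀ p q, ‖F (p, q)‖ ≤ C * (a ^ p * b ^ q)) :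
    Summable F :=
  Summable.of_norm_bounded (((summable_geometric_of_lt_one ha ha1).mul_of_nonneg
    (summable_geometric_of_lt_one hb hb1) (fun _ => by positivity)
    fun _ => by positivity).mul_left C) fun x => hF x.1 x.2

end Rearrangement

theorem sum_antidiagonal_pow_mul_pow_mul_sub {R : Type*} [CommRing R] (u z : R) (n : ℕ) :
    (∑ x ∈ antidiagonal n, u ^ x.1 * z ^ x.2) * (u - z) = u ^ (n + 1) - z ^ (n + 1) := by
  rw [Nat.sum_antidiagonal_eq_sum_range_succ (fun i j => u ^ i * z ^ j), ← geom_sum₂_mul]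
  simp

theorem HasSum.sub_div_sub {c : ℕ → ℂ} {u z A B : ℂ} (hu : HasSum (fun n => c n * u ^ n) A)
    (hz : HasSum (fun n => c n * z ^ n) B) (hne : u ≠ z) :
    HasSum (fun n => c (n + 1) * ∑ x ∈ antidiagonal n, u ^ x.1 * z ^ x.2) ((A - B) / (u - z)) := by
  have hterm : ∀ n, (c (n + 1) * u ^ (n + 1) - c (n + 1) * z ^ (n + 1)) / (u - z) =
      c (n + 1) * ∑ x ∈ antidiagonal n, u ^ x.1 * z ^ x.2 := fun n => by
    rw [div_eq_iff (sub_ne_zero.mpr hne), mul_assoc, sum_antidiagonal_pow_mul_pow_mul_sub]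
    ring
  have hsub := (hu.sub hz).div_const (u - z)
  rw [← hasSum_nat_add_iff' 1] at hsub
  simpa [hterm] using hsub

noncomputable def taylorCoeff (g : ℂ → ℂ) (n : ℕ) : ℂ := iteratedDeriv n g 0 / n.factorial

theorem taylorCoeff_zero (g : ℂ → ℂ) : taylorCoeff g 0 = g 0 := by simp [taylorCoeff]

theorem hasSum_taylorCoeff_mul_pow {g : ℂ → ℂ} {R : ℝ} (hg : DifferentiableOn ℂ g (ball 0 R))
    {u : ℂ} (hu : u ∈ ball 0 R) : HasSum (fun n => taylorCoeff g n * u ^ n) (g u) := by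
  have hterm : ∀ n : ℕ, (n.factorial : ℂ)⁻¹ • (u - 0) ^ n • iteratedDeriv n g 0 =
      taylorCoeff g n * u ^ n := fun n => by
    rw [taylorCoeff, smul_eq_mul, smul_eq_mul, sub_zero]
    ring
  simpa only [hterm] using Complex.hasSum_taylorSeries_on_ball hg hu

theorem norm_taylorCoeff_le {g : ℂ → ℂ} {r M : ℝ} (hr : 0 < r) (hg : DiffContOnCl ℂ g (ball 0 r))
    (hM : ∀ u ∈ sphere (0 : ℂ) r, ‖g u‖ ≤ M) (n : ℕ) : ‖taylorCoeff g n‖ ≤ M / r ^ n := by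
  rw [taylorCoeff, norm_div, Complex.norm_natCast, div_le_iff₀ (by positivity)]
  calc ‖iteratedDeriv n g 0‖ ≤ n.factorial * M / r ^ n :=
        Complex.norm_iteratedDeriv_le_of_forall_mem_sphere_norm_le n hr hg hM
    _ = M / r ^ n * n.factorial := by ring

theorem exists_norm_taylorCoeff_le {g : ℂ → ℂ} {R t : ℝ} (hg : DifferentiableOn ℂ g (ball 0 R))
    (ht : 0 < t) (htR : t < R) : ∃ K, ∀ n, ‖taylorCoeff g n‖ ≤ K / t ^ n := by
  have hcl : closedBall (0 : ℂ) t ⊆ ball 0 R := closedBall_subset_ball htR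
  obtain ⟨K, hK⟩ := (isCompact_sphere (0 : ℂ) t).exists_bound_of_continuousOn
    (hg.continuousOn.mono (sphere_subset_closedBall.trans hcl))
  exact ⟨K, norm_taylorCoeff_le ht (hg.diffContOnCl_ball hcl) hK⟩

theorem HasFPowerSeriesOnBall.taylorCoeff_eq {g : ℂ → ℂ} {a : ℕ → ℂ} {r : ENNReal}
    (hg : HasFPowerSeriesOnBall g (FormalMultilinearSeries.ofScalars ℂ a) 0 r) (n : ℕ) :
    taylorCoeff g n = a n := by
  have h := hg.factorial_smul 1 n
  rw [iteratedFDeriv_apply_eq_iteratedDeriv_mul_prod, FormalMultilinearSeries.ofScalars_apply_eq]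
    at h
  simp only [one_pow, smul_eq_mul, mul_one, prod_const_one, one_mul, nsmul_eq_mul] at h
  rw [taylorCoeff, ← h, mul_div_cancel_left₀ _ (by exact_mod_cast n.factorial_ne_zero)]

theorem norm_coeff_le_of_norm_tsum_le {a : ℕ → ℂ} {r r' M : ℝ} (hr : 0 < r) (hrr' : r < r')
    (hsum : Summable fun n => a n * (r' : ℂ) ^ n)
    (hM : ∀ u ∈ sphere (0 : ℂ) r, ‖∑' n, a n * u ^ n‖ ≤ M) (n : ℕ) : ‖a n‖ ≤ M / r ^ n := by
  set Q := FormalMultilinearSeries.ofScalars ℂ a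
  lift r' to NNReal using (hr.trans hrr').le
  have hrad : (r' : ENNReal) ≤ Q.radius := by
    refine Q.le_radius_of_tendsto (l := 0) ?_
    simpa [Q, FormalMultilinearSeries.ofScalars_norm] using hsum.tendsto_atTop_zero.norm
  have hQ : HasFPowerSeriesOnBall Q.sum Q 0 r' :=
    (Q.hasFPowerSeriesOnBall ((by exact_mod_cast hr.trans hrr' : (0 : ENNReal) < r').trans_le
      hrad)).mono (by exact_mod_cast hr.trans hrr') hrad
  rw [← hQ.taylorCoeff_eq n]
  refine norm_taylorCoeff_le hr (hQ.differentiableOn.diffContOnCl_ball ?_) (fun u hu => ?_) n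
  · rw [eball_coe]; exact closedBall_subset_ball hrr'
  · simpa [Q, FormalMultilinearSeries.sum, FormalMultilinearSeries.ofScalars_apply_eq, mul_comm]
      using hM u hu

/-- With `s` the mean power sums of the `z_j` and `c` the Taylor coefficients of `h`, the Taylor
coefficients of the paper's `L h` are `toeplitz s (fun m => c (m + 1))`, and its inverse `T` acts
on coefficients as `toeplitz` with the coefficients of `1 / ∑ s_q X^q` as symbol. -/
noncomputable def toeplitz (b a : ℕ → ℂ) (p : ℕ) : ℂ := ∑' q, a (p + q) * b q

theorem hasSum_toeplitz_mul_coeff_inv {s a : ℕ → ℂ} {ρ t K : ℝ} (hs0 : s 0 = 1) (hρ : 0 ≤ ρ)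
    (hs : ∀ q, ‖s q‖ ≤ ρ ^ q) (hρt : 2 * ρ < t) (ha : ∀ m, ‖a m‖ ≤ K / t ^ m) (n : ℕ) :
    HasSum (fun l => toeplitz s a (n + l) * coeff l (mk s)⁻¹) (a n) := by
  have ht : 0 < t := by linarith
  have hs0' : constantCoeff (mk s) = 1 := by simpa using hs0
  set β := fun l => coeff l (mk s)⁻¹
  have hβ : ∀ l, ‖β l‖ ≤ (2 * ρ) ^ l := norm_coeff_inv_le hs0' hρ (by simpa using hs)
  let F : ℕ × ℕ → ℂ := fun x => a (n + x.1 + x.2) * s x.2 * β x.1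
  have hF : Summable F := by
    refine summable_of_norm_le_mul_pow_mul_pow (C := K / t ^ n) (by positivity)
      ((div_lt_one ht).mpr hρt) (by positivity) ((div_lt_one ht).mpr (by linarith)) fun l q => ?_
    calc ‖F (l, q)‖ ≤ K / t ^ (n + l + q) * ρ ^ q * (2 * ρ) ^ l := by
          simp only [F, norm_mul]
          have hK : 0 ≤ K / t ^ (n + l + q) := (norm_nonneg _).trans (ha _)
          gcongr
          exacts [ha _, hs q, hβ l]
      _ = K / t ^ n * ((2 * ρ / t) ^ l * (ρ / t) ^ q) := by
          rw [pow_add, pow_add, div_pow, div_pow]; field_simp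
  have hdiag : HasSum (fun m => ∑ x ∈ antidiagonal m, F x) (a n) := by
    have hconv : ∀ m, ∑ x ∈ antidiagonal m, F x = if m = 0 then a n else 0 := fun m => by
      calc ∑ x ∈ antidiagonal m, F x = a (n + m) * ∑ x ∈ antidiagonal m, β x.1 * s x.2 := by
            rw [mul_sum]
            refine sum_congr rfl fun x hx => ?_
            rw [HasAntidiagonal.mem_antidiagonal] at hx
            simp only [F, ← hx, add_assoc]
            ring
        _ = if m = 0 then a n else 0 := by
            have hβs : ∑ x ∈ antidiagonal m, β x.1 * s x.2 = if m = 0 then 1 else 0 := by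
              have := sum_antidiagonal_coeff_inv_mul_coeff (by rw [hs0']; exact one_ne_zero) m
              simp only [coeff_mk] at this
              exact this
            rw [hβs]
            split_ifs with hm <;> simp [hm]
    simpa only [hconv] using hasSum_ite_eq 0 (a n)
  have hrow : (fun l => toeplitz s a (n + l) * β l) = fun l => ∑' q, F (l, q) := by
    funext l
    rw [toeplitz, ← tsum_mul_right]
  rw [hrow]
  exact hF.hasSum_tsum_of_hasSum_sum_antidiagonal hdiag

section MeanDivDiff

variable {k : ℕ} {z : Fin k → ℂ} {ρ : ℝ}

noncomputable def meanPowerSum (z : Fin k → ℂ) (q : ℕ) : ℂ := (k : ℂ)⁻¹ * ∑ j, z j ^ q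

noncomputable def meanDivDiff (h : ℂ → ℂ) (z : Fin k → ℂ) (u : ℂ) : ℂ :=
  1 / (k : ℂ) * ∑ j, (h u - h (z j)) / (u - z j)

theorem meanPowerSum_zero (hk : k ≠ 0) : meanPowerSum z 0 = 1 := by
  simp [meanPowerSum, hk]

theorem norm_meanPowerSum_le (hρ : 0 ≤ ρ) (hz : ∀ j, ‖z j‖ ≤ ρ) (q : ℕ) :
    ‖meanPowerSum z q‖ ≤ ρ ^ q := by
  rcases Nat.eq_zero_or_pos k with rfl | hk
  · simp [meanPowerSum]; positivity
  calc ‖meanPowerSum z q‖ ≤ (k : ℝ)⁻¹ * ∑ _j : Fin k, ρ ^ q := by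
        rw [meanPowerSum, norm_mul, norm_inv, Complex.norm_natCast]
        gcongr
        refine (norm_sum_le _ _).trans (sum_le_sum fun j _ => ?_)
        rw [norm_pow]
        exact pow_le_pow_left₀ (norm_nonneg _) (hz j) q
    _ = ρ ^ q := by simp [hk.ne']

theorem hasSum_meanDivDiff {h : ℂ → ℂ} {R : ℝ} (hh : DifferentiableOn ℂ h (ball 0 R))
    (hρ : 0 ≤ ρ) (hz : ∀ j, ‖z j‖ ≤ ρ) (hρR : ρ < R) {u : ℂ} (hu : ‖u‖ < R)
    (hne : ∀ j, u ≠ z j) :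
    HasSum (fun p => toeplitz (meanPowerSum z) (fun m => taylorCoeff h (m + 1)) p * u ^ p)
      (meanDivDiff h z u) := by
  obtain ⟨t, ht, htR⟩ := exists_between (max_lt hu hρR)
  rw [max_lt_iff] at ht
  have ht0 : 0 < t := (norm_nonneg u).trans_lt ht.1
  obtain ⟨K, hK⟩ := exists_norm_taylorCoeff_le hh ht0 htR
  let F : ℕ × ℕ → ℂ := fun x => taylorCoeff h (x.1 + x.2 + 1) * meanPowerSum z x.2 * u ^ x.1
  have hF : Summable F := by
    refine summable_of_norm_le_mul_pow_mul_pow (C := K / t) (by positivity)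
      ((div_lt_one ht0).mpr ht.1) (by positivity) ((div_lt_one ht0).mpr ht.2) fun p q => ?_
    calc ‖F (p, q)‖ ≤ K / t ^ (p + q + 1) * ρ ^ q * ‖u‖ ^ p := by
          simp only [F, norm_mul, norm_pow]
          have hK0 : 0 ≤ K / t ^ (p + q + 1) := (norm_nonneg _).trans (hK _)
          gcongr
          exacts [hK _, norm_meanPowerSum_le hρ hz q]
      _ = K / t * ((‖u‖ / t) ^ p * (ρ / t) ^ q) := by
          rw [pow_succ, pow_add, div_pow, div_pow]; field_simp
  have hdiag : HasSum (fun n => ∑ x ∈ antidiagonal n, F x) (meanDivDiff h z u) := by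
    have hj : ∀ j, HasSum
        (fun n => taylorCoeff h (n + 1) * ∑ x ∈ antidiagonal n, u ^ x.1 * z j ^ x.2)
        ((h u - h (z j)) / (u - z j)) := fun j =>
      (hasSum_taylorCoeff_mul_pow hh (mem_ball_zero_iff.mpr hu)).sub_div_sub
        (hasSum_taylorCoeff_mul_pow hh (mem_ball_zero_iff.mpr ((hz j).trans_lt hρR))) (hne j)
    have hterm : ∀ n, ∑ x ∈ antidiagonal n, F x = 1 / (k : ℂ) *
        ∑ j, taylorCoeff h (n + 1) * ∑ x ∈ antidiagonal n, u ^ x.1 * z j ^ x.2 := fun n => by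
      simp only [F, meanPowerSum, mul_sum, sum_mul]
      rw [sum_comm]
      refine sum_congr rfl fun j _ => sum_congr rfl fun x hx => ?_
      rw [HasAntidiagonal.mem_antidiagonal] at hx
      rw [hx]
      ring
    simp only [hterm]
    exact (hasSum_sum fun j _ => hj j).mul_left (1 / (k : ℂ))
  have hrow : (fun p => toeplitz (meanPowerSum z) (fun m => taylorCoeff h (m + 1)) p * u ^ p) =
      fun p => ∑' q, F (p, q) := by
    funext p
    rw [toeplitz, ← tsum_mul_right]
  rw [hrow]
  exact hF.hasSum_tsum_of_hasSum_sum_antidiagonal hdiag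

theorem ne_of_lt_norm {u : ℂ} (hz : ∀ j, ‖z j‖ ≤ ρ) (hu : ρ < ‖u‖) (j : Fin k) : u ≠ z j := by
  rintro rfl
  exact (hz j).not_gt hu

theorem norm_toeplitz_taylorCoeff_le {h : ℂ → ℂ} {R r M : ℝ}
    (hh : DifferentiableOn ℂ h (ball 0 R)) (hρ : 0 ≤ ρ) (hz : ∀ j, ‖z j‖ ≤ ρ) (hρr : ρ < r)
    (hrR : r < R) (hM : ∀ u ∈ sphere (0 : ℂ) r, ‖meanDivDiff h z u‖ ≤ M) (p : ℕ) :
    ‖toeplitz (meanPowerSum z) (fun m => taylorCoeff h (m + 1)) p‖ ≤ M / r ^ p := by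
  have hr : 0 < r := hρ.trans_lt hρr
  have key {u : ℂ} (hu : ρ < ‖u‖) (huR : ‖u‖ < R) :=
    hasSum_meanDivDiff hh hρ hz (hρr.trans hrR) huR (ne_of_lt_norm hz hu)
  have hr' : ‖(((r + R) / 2 : ℝ) : ℂ)‖ = (r + R) / 2 := by
    rw [Complex.norm_real, Real.norm_of_nonneg (by linarith)]
  refine norm_coeff_le_of_norm_tsum_le hr (r' := (r + R) / 2) (by linarith)
    (key (by rw [hr']; linarith) (by rw [hr']; linarith)).summable (fun u hu => ?_) p
  rw [mem_sphere_zero_iff_norm] at hu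
  rw [(key (by rw [hu]; exact hρr) (by rw [hu]; exact hrR)).tsum_eq]
  exact hM u (mem_sphere_zero_iff_norm.mpr hu)

theorem norm_taylorCoeff_succ_le (hk : k ≠ 0) {h : ℂ → ℂ} {R r M : ℝ}
    (hh : DifferentiableOn ℂ h (ball 0 R)) (hρ : 0 ≤ ρ) (hz : ∀ j, ‖z j‖ ≤ ρ) (hρr : 2 * ρ < r)
    (hrR : r < R) (hM : ∀ u ∈ sphere (0 : ℂ) r, ‖meanDivDiff h z u‖ ≤ M) (n : ℕ) :
    ‖taylorCoeff h (n + 1)‖ ≤ M / (1 - 2 * ρ / r) / r ^ n := by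
  have hr : 0 < r := by linarith
  obtain ⟨K, hK⟩ := exists_norm_taylorCoeff_le hh hr hrR
  have hsucc : ∀ m, ‖taylorCoeff h (m + 1)‖ ≤ K / r / r ^ m := fun m => by
    rw [div_div, ← pow_succ']; exact hK _
  have hinv := hasSum_toeplitz_mul_coeff_inv (meanPowerSum_zero hk) hρ
    (norm_meanPowerSum_le hρ hz) hρr hsucc n
  have hgeom := (hasSum_geometric_of_lt_one (by positivity) ((div_lt_one hr).mpr hρr)).mul_left
    (M / r ^ n)
  refine (hinv.norm_le_of_bounded hgeom fun l => ?_).trans_eq (by field_simp)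
  have hB := norm_toeplitz_taylorCoeff_le hh hρ hz (by linarith) hrR hM (n + l)
  have hβ : ‖coeff l (mk (meanPowerSum z))⁻¹‖ ≤ (2 * ρ) ^ l :=
    norm_coeff_inv_le (by simpa using meanPowerSum_zero hk) hρ
      (by simpa using norm_meanPowerSum_le hρ hz) l
  calc _ ≤ M / r ^ (n + l) * (2 * ρ) ^ l := by
        rw [norm_mul]; exact mul_le_mul hB hβ (norm_nonneg _) ((norm_nonneg _).trans hB)
    _ = M / r ^ n * (2 * ρ / r) ^ l := by rw [pow_add, div_pow]; field_simp

end MeanDivDiff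

theorem T_norm_bound_general (R ρ r₀ r₁ : ℝ) (k : ℕ) (hk : 1 ≤ k) (z : Fin k → ℂ)
    (hρ0 : 0 ≤ ρ) (hρ : ∀ i, ‖z i‖ ≤ ρ)
    (h1 : 2 * ρ < r₀) (h2 : r₀ < r₁) (h3 : r₁ < R)
    (f h : ℂ → ℂ)
    (hhA : DifferentiableOn ℂ h (Metric.ball (0 : ℂ) R)) (hh0 : h 0 = 0)
    (hLh : ∀ w ∈ Metric.ball (0 : ℂ) R, (∀ j, w ≠ z j) →
      f w = (1 / (k : ℂ)) * ∑ j, (h w - h (z j)) / (w - z j))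
    (M : ℝ) (hM : ∀ w : ℂ, ‖w‖ ≤ r₁ → ‖f w‖ ≤ M) :
    ∀ w : ℂ, ‖w‖ ≤ r₀ →
      ‖h w‖ ≤ (r₀ / ((1 - 2 * ρ / r₁) * (1 - r₀ / r₁))) * M := by
  intro w hw
  have hr₀ : 0 < r₀ := by linarith
  have hr₁ : 0 < r₁ := hr₀.trans h2
  have hM' : ∀ u ∈ sphere (0 : ℂ) r₁, ‖meanDivDiff h z u‖ ≤ M := fun u hu => by
    rw [mem_sphere_zero_iff_norm] at hu
    rw [meanDivDiff, ← hLh u (mem_ball_zero_iff.mpr (hu.trans_lt h3))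
      (ne_of_lt_norm hρ (by linarith))]
    exact hM u hu.le
  have hcoeff := norm_taylorCoeff_succ_le (by omega) hhA hρ0 hρ (h1.trans h2) h3 hM'
  have hsum : HasSum (fun n => taylorCoeff h (n + 1) * w ^ (n + 1)) (h w) := by
    have := hasSum_taylorCoeff_mul_pow hhA (mem_ball_zero_iff.mpr (by linarith))
    rwa [← hasSum_nat_add_iff' 1, sum_range_one, taylorCoeff_zero, hh0, zero_mul, sub_zero]
      at this
  have hgeom := (hasSum_geometric_of_lt_one (by positivity) ((div_lt_one hr₁).mpr h2)).mul_left
    (M / (1 - 2 * ρ / r₁) * r₀)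
  refine (hsum.norm_le_of_bounded hgeom fun n => ?_).trans_eq (by field_simp)
  calc _ ≤ M / (1 - 2 * ρ / r₁) / r₁ ^ n * r₀ ^ (n + 1) := by
        rw [norm_mul, norm_pow]
        exact mul_le_mul (hcoeff n) (pow_le_pow_left₀ (norm_nonneg _) hw _) (by positivity)
          ((norm_nonneg _).trans (hcoeff n))
    _ = M / (1 - 2 * ρ / r₁) * r₀ * (r₀ / r₁) ^ n := by rw [pow_succ, div_pow]; field_simp

/-- Continuity bound for the inverse operator `T = L⁻¹`:
`‖T f‖_{r₀} ≤ (r₀ / ((1 - 2ρ/r₁)(1 - r₀/r₁))) ‖f‖_{r₁}`.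
Here `h = T f`, i.e. `L h = f`. -/
theorem T_norm_bound (R ρ r₀ r₁ : ℝ) (k : ℕ) (hk : 1 ≤ k) (z : Fin k → ℂ)
    (hρ0 : 0 ≤ ρ) (hρ : ∀ i, ‖z i‖ ≤ ρ)
    (h1 : 2 * ρ < r₀) (h2 : r₀ < r₁) (h3 : r₁ < R)
    (f h : ℂ → ℂ)
    (hfA : DifferentiableOn ℂ f (Metric.ball (0 : ℂ) R))
    (hhA : DifferentiableOn ℂ h (Metric.ball (0 : ℂ) R)) (hh0 : h 0 = 0)
    (hLh : ∀ w ∈ Metric.ball (0 : ℂ) R, (∀ j, w ≠ z j) →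
      f w = (1 / (k : ℂ)) * ∑ j, (h w - h (z j)) / (w - z j))
    (M : ℝ) (hM : ∀ w : ℂ, ‖w‖ ≤ r₁ → ‖f w‖ ≤ M) :
    ∀ w : ℂ, ‖w‖ ≤ r₀ →
      ‖h w‖ ≤ (r₀ / ((1 - 2 * ρ / r₁) * (1 - r₀ / r₁))) * M :=
  T_norm_bound_general R ρ r₀ r₁ k hk z hρ0 hρ h1 h2 h3 f h hhA hh0 hLh M hM
end

section
/- For all $\rho,r$ with $0\le2\rho<r<R$, there exists $c>0$ (depending only on $\rho,r,k$) such that for every choice of $z_1,\dots,z_k$ with $\max_i|z_i|\le\rho$ and every analytic $f$ on $D=\{|z|<R\}$ with $f(0)=0$, $\left\|\frac{1}{k}\sum_{j=1}^k\frac{f(\cdot)-f(z_j)}{\cdot-z_j}\right\|_r\ge c\cdot\|f\|_r$. -/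
/-!
Write `f u = ∑ aₙ uⁿ`. For `‖x‖ ≤ ρ` the slope `(f u - f x) / (u - x)` has Taylor coefficients
`slopeCoeff a x p = ∑ₘ a_{p+1+m} xᵐ`, so `g` has coefficients `dₚ = 𝔼ⱼ slopeCoeff a zⱼ p`, and
`slopeCoeff a x p = a_{p+1} + x · slopeCoeff a x (p+1)` exhibits `a_{p+1}` as `dₚ` plus a tail of
relative size `ρ / (r - ρ) < 1` when `2ρ < r`. With Cauchy's estimate `‖dₚ‖ rᵖ ≤ ‖g‖ᵣ` this bounds
`supₙ ‖aₙ‖ rⁿ`, hence every `f zⱼ`, by a multiple of `‖g‖ᵣ`. On `‖u‖ = r`,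
`f u · 𝔼ⱼ (u - zⱼ)⁻¹ = g u + 𝔼ⱼ f zⱼ / (u - zⱼ)`, and `Re (u / (u - zⱼ)) ≥ r (r - ρ) / (r + ρ)²`
keeps the first factor away from zero; the maximum modulus principle extends the bound to the disc.
-/

open Metric Finset
open scoped BigOperators

/-- The `p`-th Taylor coefficient at `0` of `u ↦ (F u - F x) / (u - x)` when `F u = ∑ aₙ uⁿ`. -/
noncomputable def slopeCoeff (a : ℕ → ℂ) (x : ℂ) (p : ℕ) : ℂ := ∑' m, a (p + 1 + m) * x ^ m

section SlopeCoeff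

variable {a : ℕ → ℂ} {C r ρ : ℝ} {x u : ℂ}

lemma norm_coeff_mul_pow_le_geometric (ha : ∀ n, ‖a n‖ * r ^ n ≤ C) (hx : ‖x‖ ≤ ρ)
    (hρr : ρ < r) (p m : ℕ) :
    ‖a (p + 1 + m) * x ^ m‖ ≤ C / r ^ (p + 1) * (ρ / r) ^ m := by
  have hr : 0 < r := (norm_nonneg x).trans_lt (hx.trans_lt hρr)
  have hC : ‖a (p + 1 + m)‖ ≤ C / r ^ (p + 1 + m) := (le_div_iff₀ (by positivity)).2 (ha _)
  calc ‖a (p + 1 + m) * x ^ m‖ ≤ C / r ^ (p + 1 + m) * ρ ^ m := by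
        rw [norm_mul, norm_pow]
        exact mul_le_mul hC (pow_le_pow_left₀ (norm_nonneg x) hx m) (by positivity)
          ((norm_nonneg _).trans hC)
    _ = C / r ^ (p + 1) * (ρ / r) ^ m := by
        rw [pow_add, div_pow]; field_simp

lemma summable_slopeCoeff_terms (ha : ∀ n, ‖a n‖ * r ^ n ≤ C) (hx : ‖x‖ ≤ ρ) (hρr : ρ < r)
    (p : ℕ) : Summable fun m => a (p + 1 + m) * x ^ m := by
  have hr : 0 < r := (norm_nonneg x).trans_lt (hx.trans_lt hρr)
  have hρ : 0 ≤ ρ := (norm_nonneg x).trans hx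
  exact .of_norm_bounded
    ((summable_geometric_of_lt_one (by positivity) ((div_lt_one hr).2 hρr)).mul_left _)
    (norm_coeff_mul_pow_le_geometric ha hx hρr p)

lemma norm_slopeCoeff_mul_pow_le (ha : ∀ n, ‖a n‖ * r ^ n ≤ C) (hx : ‖x‖ ≤ ρ) (hρr : ρ < r)
    (p : ℕ) : ‖slopeCoeff a x p‖ * r ^ p ≤ C / (r - ρ) := by
  have hr : 0 < r := (norm_nonneg x).trans_lt (hx.trans_lt hρr)
  have hρ : 0 ≤ ρ := (norm_nonneg x).trans hx
  have hgeom := (hasSum_geometric_of_lt_one (by positivity) ((div_lt_one hr).2 hρr)).mul_left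
    (C / r ^ (p + 1))
  have h := tsum_of_norm_bounded hgeom (norm_coeff_mul_pow_le_geometric ha hx hρr p)
  calc ‖slopeCoeff a x p‖ * r ^ p ≤ C / r ^ (p + 1) * (1 - ρ / r)⁻¹ * r ^ p := by
        gcongr; exact h
    _ = C / (r - ρ) := by
        have : r - ρ ≠ 0 := by linarith
        field_simp; ring

lemma slopeCoeff_eq_add_mul (ha : ∀ n, ‖a n‖ * r ^ n ≤ C) (hx : ‖x‖ ≤ ρ) (hρr : ρ < r)
    (p : ℕ) : slopeCoeff a x p = a (p + 1) + x * slopeCoeff a x (p + 1) := by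
  rw [slopeCoeff, (summable_slopeCoeff_terms ha hx hρr p).tsum_eq_zero_add, slopeCoeff,
    ← tsum_mul_left]
  simp only [add_zero, pow_zero, mul_one, pow_succ]
  congr 1
  exact tsum_congr fun m => by rw [show p + 1 + (m + 1) = p + 1 + 1 + m by omega]; ring

lemma hasSum_coeff_mul_pow_add_mul_slopeCoeff (ha : ∀ n, ‖a n‖ * r ^ n ≤ C) (hx : ‖x‖ ≤ ρ)
    (hρr : ρ < r) : HasSum (fun n => a n * x ^ n) (a 0 + x * slopeCoeff a x 0) := by
  rw [← hasSum_nat_add_iff' 1]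
  simp only [Finset.range_one, Finset.sum_singleton, pow_zero, mul_one, add_sub_cancel_left]
  refine ((summable_slopeCoeff_terms ha hx hρr 0).hasSum.mul_left x).congr_fun fun m => ?_
  rw [pow_succ, zero_add, add_comm 1 m]; ring

lemma summable_slopeCoeff_mul_pow (ha : ∀ n, ‖a n‖ * r ^ n ≤ C) (hx : ‖x‖ ≤ ρ) (hρr : ρ < r)
    (hu : ‖u‖ < r) : Summable fun p => slopeCoeff a x p * u ^ p := by
  have hr : 0 < r := (norm_nonneg x).trans_lt (hx.trans_lt hρr)
  refine .of_norm_bounded ((summable_geometric_of_lt_one (by positivity)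
    ((div_lt_one hr).2 hu)).mul_left (C / (r - ρ))) fun p => ?_
  calc ‖slopeCoeff a x p * u ^ p‖ = ‖slopeCoeff a x p‖ * r ^ p * (‖u‖ / r) ^ p := by
        rw [norm_mul, norm_pow, div_pow]; field_simp
    _ ≤ C / (r - ρ) * (‖u‖ / r) ^ p := by
        gcongr; exact norm_slopeCoeff_mul_pow_le ha hx hρr p

lemma hasSum_slopeCoeff_mul_pow {F : ℂ → ℂ} (ha : ∀ n, ‖a n‖ * r ^ n ≤ C) (hx : ‖x‖ ≤ ρ)
    (hρr : ρ < r) (hu : ‖u‖ < r) (hux : u ≠ x) (hFu : HasSum (fun n => a n * u ^ n) (F u))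
    (hFx : HasSum (fun n => a n * x ^ n) (F x)) :
    HasSum (fun p => slopeCoeff a x p * u ^ p) ((F u - F x) / (u - x)) := by
  set c := slopeCoeff a x
  have hS := (summable_slopeCoeff_mul_pow ha hx hρr hu).hasSum
  set S := ∑' p, c p * u ^ p
  have hshift : HasSum (fun p => c p * u ^ (p + 1)) (u * S) :=
    (hS.mul_left u).congr_fun fun p => by ring
  have hshift' : HasSum (fun p => x * (c (p + 1) * u ^ (p + 1))) (x * S - x * c 0) := by
    simpa using (hasSum_nat_add_iff' 1).2 (hS.mul_left x)
  have htail : HasSum (fun p => a (p + 1) * u ^ (p + 1)) (F u - a 0) := by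
    simpa using (hasSum_nat_add_iff' 1).2 hFu
  have hdiff : HasSum (fun p => a (p + 1) * u ^ (p + 1)) (u * S - (x * S - x * c 0)) :=
    (hshift.sub hshift').congr_fun fun p => by
      rw [show c p = _ from slopeCoeff_eq_add_mul ha hx hρr p]; ring
  have hFx' : F x = a 0 + x * c 0 := hFx.unique (hasSum_coeff_mul_pow_add_mul_slopeCoeff ha hx hρr)
  have hkey : (u - x) * S = F u - F x := by
    rw [hFx']; linear_combination hdiff.unique htail
  rwa [← hkey, mul_div_cancel_left₀ _ (sub_ne_zero.2 hux)]

end SlopeCoeff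

lemma norm_mul_pow_le_of_norm_tsum_le_on_sphere {d : ℕ → ℂ} {r r₁ M G : ℝ} (hr : 0 < r)
    (hr₁ : r < r₁) (hd : ∀ p, ‖d p‖ * r₁ ^ p ≤ M)
    (hG : ∀ u ∈ sphere (0 : ℂ) r, ‖∑' p, d p * u ^ p‖ ≤ G) (p : ℕ) : ‖d p‖ * r ^ p ≤ G := by
  set D := FormalMultilinearSeries.ofScalars ℂ d
  have hrad : (r₁.toNNReal : ENNReal) ≤ D.radius := D.le_radius_of_bound M fun n => by
    rw [FormalMultilinearSeries.ofScalars_norm, Real.coe_toNNReal _ (by linarith)]; exact hd n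
  have hD := D.hasFPowerSeriesOnBall
    ((ENNReal.coe_pos.2 (Real.toNNReal_pos.2 (by linarith))).trans_le hrad)
  have hsum : ∀ u, D.sum u = ∑' p, d p * u ^ p := fun u =>
    (FormalMultilinearSeries.ofScalars_sum_eq d u).trans (tsum_congr fun p => smul_eq_mul ..)
  have hcont : DiffContOnCl ℂ D.sum (ball 0 r) := by
    refine (hD.differentiableOn.mono fun u hu => ?_).diffContOnCl
    rw [closure_ball _ hr.ne', mem_closedBall, ← edist_le_ofReal hr.le] at hu
    exact hu.trans_lt ((ENNReal.ofReal_lt_ofReal_iff (by linarith)).2 hr₁ |>.trans_le hrad)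
  have hcoeff : d p = iteratedDeriv p D.sum 0 / p.factorial := by
    have := hD.hasFPowerSeriesAt.eq_formalMultilinearSeries hD.analyticAt.hasFPowerSeriesAt
    simpa [D] using congrArg (FormalMultilinearSeries.coeff · p) this
  have hcauchy := Complex.norm_iteratedDeriv_le_of_forall_mem_sphere_norm_le p hr hcont
    fun u hu => (hsum u).symm ▸ hG u hu
  rw [hcoeff, norm_div, Complex.norm_natCast, div_mul_eq_mul_div, div_le_iff₀ (by positivity)]
  rw [le_div_iff₀ (by positivity)] at hcauchy
  linarith

lemma le_re_div_sub {u v : ℂ} {r ρ : ℝ} (hu : ‖u‖ = r) (hv : ‖v‖ ≤ ρ) (hρr : ρ < r) :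
    r * (r - ρ) / (r + ρ) ^ 2 ≤ (u / (u - v)).re := by
  have hρ : 0 ≤ ρ := (norm_nonneg v).trans hv
  have hne : u - v ≠ 0 := sub_ne_zero.2 fun h => by rw [h] at hu; linarith
  have hnum : r * (r - ρ) ≤ (u * (starRingEnd ℂ) (u - v)).re := by
    have : (u * (starRingEnd ℂ) v).re ≤ r * ρ := by
      refine (Complex.re_le_norm _).trans ?_
      rw [norm_mul, Complex.norm_conj, hu]; gcongr; linarith
    rw [map_sub, mul_sub u, Complex.sub_re, Complex.mul_conj', hu]
    simp only [← Complex.ofReal_pow, Complex.ofReal_re]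
    nlinarith
  have hden : ‖u - v‖ ^ 2 ≤ (r + ρ) ^ 2 := by
    have := (norm_sub_le u v).trans (by rw [hu]; linarith : ‖u‖ + ‖v‖ ≤ r + ρ)
    gcongr
  rw [← mul_div_mul_right u (u - v) ((map_ne_zero (starRingEnd ℂ)).2 hne), Complex.mul_conj',
    ← Complex.ofReal_pow, Complex.div_ofReal_re]
  have hpos : 0 < ‖u - v‖ ^ 2 := by positivity
  calc r * (r - ρ) / (r + ρ) ^ 2 ≤ r * (r - ρ) / ‖u - v‖ ^ 2 := by
        gcongr; nlinarith
    _ ≤ _ := by gcongr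

section Average

variable {ι : Type*} [Fintype ι] {a : ℕ → ℂ} {z : ι → ℂ} {C G r ρ : ℝ}

lemma hasSum_expect_slopeCoeff_mul_pow {F : ℂ → ℂ} {u : ℂ} (ha : ∀ n, ‖a n‖ * r ^ n ≤ C)
    (hz : ∀ i, ‖z i‖ ≤ ρ) (hρr : ρ < r) (hF : ∀ v, ‖v‖ < r → HasSum (fun n => a n * v ^ n) (F v))
    (hu : ‖u‖ < r) (hne : ∀ i, u ≠ z i) :
    HasSum (fun p => (𝔼 i, slopeCoeff a (z i) p) * u ^ p) (𝔼 i, (F u - F (z i)) / (u - z i)) := by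
  simp only [Fintype.expect_eq_sum_div_card, div_mul_eq_mul_div, Finset.sum_mul]
  exact (hasSum_sum fun i _ => hasSum_slopeCoeff_mul_pow ha (hz i) hρr hu (hne i) (hF u hu)
    (hF (z i) ((hz i).trans_lt hρr))).div_const _

variable [Nonempty ι]

lemma norm_expect_mul_le {w : ι → ℂ} {t B : ℝ} (ht : 0 ≤ t) (h : ∀ i, ‖w i‖ * t ≤ B) :
    ‖𝔼 i, w i‖ * t ≤ B :=
  (mul_le_mul_of_nonneg_right (RCLike.norm_expect_le (K := ℂ)) ht).trans <| by
    rw [expect_mul]; exact expect_le univ_nonempty fun i _ => h i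

lemma norm_coeff_succ_mul_pow_le {q : ℝ} (hq : ∀ n, ‖a n‖ * r ^ n ≤ q) (hz : ∀ i, ‖z i‖ ≤ ρ)
    (hρr : ρ < r) (hd : ∀ p, ‖𝔼 i, slopeCoeff a (z i) p‖ * r ^ p ≤ G) (p : ℕ) :
    ‖a (p + 1)‖ * r ^ (p + 1) ≤ G * r + ρ * (q / (r - ρ)) := by
  have hρ0 : 0 ≤ ρ := (norm_nonneg _).trans (hz (Classical.arbitrary ι))
  have hr : 0 < r := by linarith
  set tail := 𝔼 i, z i * slopeCoeff a (z i) (p + 1)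
  have hrec : a (p + 1) = 𝔼 i, slopeCoeff a (z i) p - tail := by
    rw [← expect_sub_distrib]
    simp_rw [slopeCoeff_eq_add_mul hq (hz _) hρr p, add_sub_cancel_right]
    exact (Fintype.expect_const _).symm
  have htail : ‖tail‖ * r ^ (p + 1) ≤ ρ * (q / (r - ρ)) :=
    norm_expect_mul_le (by positivity) fun i => by
      rw [norm_mul, mul_assoc]
      exact mul_le_mul (hz i) (norm_slopeCoeff_mul_pow_le hq (hz i) hρr _) (by positivity) hρ0
  calc ‖a (p + 1)‖ * r ^ (p + 1)
      ≤ (‖𝔼 i, slopeCoeff a (z i) p‖ + ‖tail‖) * r ^ (p + 1) := by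
        rw [hrec]; gcongr; exact norm_sub_le _ _
    _ = r * (‖𝔼 i, slopeCoeff a (z i) p‖ * r ^ p) + ‖tail‖ * r ^ (p + 1) := by ring
    _ ≤ G * r + ρ * (q / (r - ρ)) := by nlinarith [hd p]

lemma norm_coeff_mul_pow_le_of_expect_slopeCoeff (ha0 : a 0 = 0) (ha : ∀ n, ‖a n‖ * r ^ n ≤ C)
    (hz : ∀ i, ‖z i‖ ≤ ρ) (hρ : 2 * ρ < r)
    (hd : ∀ p, ‖𝔼 i, slopeCoeff a (z i) p‖ * r ^ p ≤ G) (n : ℕ) :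
    ‖a n‖ * r ^ n ≤ G * r * (r - ρ) / (r - 2 * ρ) := by
  have hρ0 : 0 ≤ ρ := (norm_nonneg _).trans (hz (Classical.arbitrary ι))
  have hr : 0 < r := by linarith
  have hrρ : 0 < r - ρ := by linarith
  have hG : 0 ≤ G := (norm_nonneg _).trans (by simpa using hd 0)
  set q := ⨆ n, ‖a n‖ * r ^ n
  have hq : ∀ n, ‖a n‖ * r ^ n ≤ q := le_ciSup ⟨C, by rintro _ ⟨n, rfl⟩; exact ha n⟩
  have hq0 : 0 ≤ q := by simpa [ha0] using hq 0
  have hqle : q ≤ G * r + ρ * (q / (r - ρ)) := ciSup_le fun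
    | 0 => by simp only [ha0, norm_zero, zero_mul]; positivity
    | p + 1 => norm_coeff_succ_mul_pow_le hq hz (by linarith) hd p
  have : ρ * (q / (r - ρ)) * (r - ρ) = ρ * q := by rw [mul_assoc, div_mul_cancel₀ _ hrρ.ne']
  rw [le_div_iff₀ (by linarith)]
  nlinarith [hq n, mul_le_mul_of_nonneg_right hqle hrρ.le]

lemma norm_le_of_expect_slopeCoeff {x y : ℂ} (ha0 : a 0 = 0) (ha : ∀ n, ‖a n‖ * r ^ n ≤ C)
    (hz : ∀ i, ‖z i‖ ≤ ρ) (hρ : 2 * ρ < r)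
    (hd : ∀ p, ‖𝔼 i, slopeCoeff a (z i) p‖ * r ^ p ≤ G) (hx : ‖x‖ ≤ ρ)
    (hy : HasSum (fun n => a n * x ^ n) y) : ‖y‖ ≤ G * r * ρ / (r - 2 * ρ) := by
  have hρ0 : 0 ≤ ρ := (norm_nonneg _).trans hx
  have hρr : ρ < r := by linarith
  have hc := norm_slopeCoeff_mul_pow_le (norm_coeff_mul_pow_le_of_expect_slopeCoeff ha0 ha hz hρ hd)
    hx hρr 0
  rw [hy.unique (hasSum_coeff_mul_pow_add_mul_slopeCoeff ha hx hρr), ha0, zero_add, norm_mul]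
  calc ‖x‖ * ‖slopeCoeff a x 0‖ ≤ ρ * (G * r * (r - ρ) / (r - 2 * ρ) / (r - ρ)) := by
        rw [pow_zero, mul_one] at hc
        exact mul_le_mul hx hc (norm_nonneg _) hρ0
    _ = G * r * ρ / (r - 2 * ρ) := by
        have : r - ρ ≠ 0 := by linarith
        field_simp

lemma le_norm_expect_inv_sub {u : ℂ} (hu : ‖u‖ = r) (hz : ∀ i, ‖z i‖ ≤ ρ) (hρr : ρ < r) :
    (r - ρ) / (r + ρ) ^ 2 ≤ ‖𝔼 i, (u - z i)⁻¹‖ := by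
  have hr : 0 < r := ((norm_nonneg _).trans (hz (Classical.arbitrary ι))).trans_lt hρr
  have hre : r * (r - ρ) / (r + ρ) ^ 2 ≤ (u * 𝔼 i, (u - z i)⁻¹).re := by
    rw [mul_expect, Complex.re_expect]
    exact le_expect univ_nonempty fun i _ => div_eq_mul_inv u _ ▸ le_re_div_sub hu (hz i) hρr
  have := hre.trans (Complex.re_le_norm _)
  rw [norm_mul, hu, mul_div_assoc] at this
  exact le_of_mul_le_mul_left this hr

lemma norm_mul_le_norm_expect_slope_add {F : ℂ → ℂ} {u : ℂ} {B : ℝ} (hu : ‖u‖ = r)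
    (hz : ∀ i, ‖z i‖ ≤ ρ) (hρr : ρ < r) (hB : ∀ i, ‖F (z i)‖ ≤ B) :
    ‖F u‖ * ((r - ρ) / (r + ρ) ^ 2) ≤ ‖𝔼 i, (F u - F (z i)) / (u - z i)‖ + B / (r - ρ) := by
  have hB0 : 0 ≤ B := (norm_nonneg _).trans (hB (Classical.arbitrary ι))
  have hdist : ∀ i, r - ρ ≤ ‖u - z i‖ := fun i =>
    (by rw [hu]; linarith [hz i] : r - ρ ≤ ‖u‖ - ‖z i‖).trans (norm_sub_norm_le _ _)
  have hsplit : F u * 𝔼 i, (u - z i)⁻¹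
      = 𝔼 i, (F u - F (z i)) / (u - z i) + 𝔼 i, F (z i) / (u - z i) := by
    rw [mul_expect, ← expect_add_distrib]
    exact expect_congr rfl fun i _ => by ring
  have hrest : ‖𝔼 i, F (z i) / (u - z i)‖ ≤ B / (r - ρ) := by
    simpa using norm_expect_mul_le zero_le_one fun i => by
      rw [mul_one, norm_div]
      exact div_le_div₀ hB0 (hB i) (by linarith) (hdist i)
  calc ‖F u‖ * ((r - ρ) / (r + ρ) ^ 2) ≤ ‖F u * 𝔼 i, (u - z i)⁻¹‖ := by
        rw [norm_mul]; gcongr; exact le_norm_expect_inv_sub hu hz hρr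
    _ ≤ _ := by rw [hsplit]; exact norm_add_le_of_le le_rfl hrest

lemma norm_mul_le_of_norm_expect_slope_le {F : ℂ → ℂ} {r₁ : ℝ} (ha0 : a 0 = 0)
    (ha : ∀ n, ‖a n‖ * r₁ ^ n ≤ C) (hF : ∀ v, ‖v‖ < r₁ → HasSum (fun n => a n * v ^ n) (F v))
    (hz : ∀ i, ‖z i‖ ≤ ρ) (hρ : 2 * ρ < r) (hr₁ : r < r₁)
    (hG : ∀ u ∈ sphere (0 : ℂ) r, ‖𝔼 i, (F u - F (z i)) / (u - z i)‖ ≤ G) {u : ℂ} (hu : ‖u‖ = r) :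
    ‖F u‖ * ((r - ρ) / (r + ρ) ^ 2) ≤ G * (1 + r * ρ / ((r - 2 * ρ) * (r - ρ))) := by
  have hρ0 : 0 ≤ ρ := (norm_nonneg _).trans (hz (Classical.arbitrary ι))
  have hr : 0 < r := by linarith
  have hd : ∀ p, ‖𝔼 i, slopeCoeff a (z i) p‖ * r ^ p ≤ G := by
    refine norm_mul_pow_le_of_norm_tsum_le_on_sphere hr hr₁ (M := C / (r₁ - ρ))
      (fun p => norm_expect_mul_le (pow_nonneg (by linarith) p) fun i =>
        norm_slopeCoeff_mul_pow_le ha (hz i) (by linarith) p) fun v hv => ?_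
    have hv' : ‖v‖ = r := mem_sphere_zero_iff_norm.1 hv
    have hne : ∀ i, v ≠ z i := fun i h => by linarith [hz i, h ▸ hv']
    rw [(hasSum_expect_slopeCoeff_mul_pow ha hz (by linarith) hF (by linarith) hne).tsum_eq]
    exact hG v hv
  have har : ∀ n, ‖a n‖ * r ^ n ≤ C := fun n =>
    (mul_le_mul_of_nonneg_left (pow_le_pow_left₀ hr.le hr₁.le n) (norm_nonneg _)).trans (ha n)
  have hFz : ∀ i, ‖F (z i)‖ ≤ G * r * ρ / (r - 2 * ρ) := fun i =>
    norm_le_of_expect_slopeCoeff ha0 har hz hρ hd (hz i) (hF _ (by linarith [hz i]))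
  calc ‖F u‖ * ((r - ρ) / (r + ρ) ^ 2)
      ≤ ‖𝔼 i, (F u - F (z i)) / (u - z i)‖ + G * r * ρ / (r - 2 * ρ) / (r - ρ) :=
        norm_mul_le_norm_expect_slope_add hu hz (by linarith) hFz
    _ ≤ G + G * r * ρ / (r - 2 * ρ) / (r - ρ) := by
        gcongr; exact hG u (mem_sphere_zero_iff_norm.2 hu)
    _ = G * (1 + r * ρ / ((r - 2 * ρ) * (r - ρ))) := by rw [div_div]; ring

end Average

lemma DifferentiableOn.exists_hasSum_coeff_mul_pow {f : ℂ → ℂ} {r R : ℝ}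
    (hf : DifferentiableOn ℂ f (ball 0 R)) (hr : 0 ≤ r) (hrR : r < R) :
    ∃ a : ℕ → ℂ, ∃ C, a 0 = f 0 ∧ (∀ n, ‖a n‖ * r ^ n ≤ C) ∧
      ∀ u, ‖u‖ < r → HasSum (fun n => a n * u ^ n) (f u) := by
  obtain ⟨s, hrs, hsR⟩ := exists_between hrR
  lift s to NNReal using hr.trans hrs.le
  have hs : HasFPowerSeriesOnBall f (cauchyPowerSeries f 0 s) 0 s :=
    (hf.mono (closedBall_subset_ball hsR)).hasFPowerSeriesOnBall
      (by exact_mod_cast hr.trans_lt hrs)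
  have hrs' : (r.toNNReal : ENNReal) < s := by
    rw [ENNReal.coe_lt_coe, Real.toNNReal_lt_iff_lt_coe hr]; exact hrs
  obtain ⟨C, -, hC⟩ :=
    (cauchyPowerSeries f 0 s).norm_mul_pow_le_of_lt_radius (hrs'.trans_le hs.r_le)
  refine ⟨(cauchyPowerSeries f 0 s).coeff, C, hs.coeff_zero _,
    fun n => by simpa [Real.coe_toNNReal _ hr] using hC n, fun u hu => ?_⟩
  have hmem : u ∈ eball (0 : ℂ) s := by rw [eball_coe, mem_ball_zero_iff]; linarith
  simpa [mul_comm] using hs.hasSum hmem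

lemma norm_le_of_forall_mem_sphere_norm_le {E : Type*} [NormedAddCommGroup E] [NormedSpace ℂ E]
    {f : ℂ → E} {c w : ℂ} {r B : ℝ} (hr : 0 < r) (hf : DiffContOnCl ℂ f (ball c r))
    (hB : ∀ u ∈ sphere c r, ‖f u‖ ≤ B) (hw : w ∈ closedBall c r) : ‖f w‖ ≤ B :=
  Complex.norm_le_of_forall_mem_frontier_norm_le isBounded_ball hf
    (by rwa [frontier_ball c hr.ne']) (by rwa [closure_ball c hr.ne'])

/-- Lemma 2: coercivity of `L`. For `0 ≤ 2ρ < r < R` there is `c > 0`,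
independent of `z₁, …, z_k`, such that `‖L f‖ᵣ ≥ c ‖f‖ᵣ` for all `f ∈ H₀`.
Here `g` is the analytic extension of `L f`. -/
theorem L_coercive (R : ℝ) (k : ℕ) (hk : 1 ≤ k) (ρ r : ℝ)
    (hρ0 : 0 ≤ ρ) (h1 : 2 * ρ < r) (h2 : r < R) :
    ∃ c > (0 : ℝ), ∀ z : Fin k → ℂ, (∀ i, ‖z i‖ ≤ ρ) →
      ∀ f g : ℂ → ℂ,
        DifferentiableOn ℂ f (Metric.ball (0 : ℂ) R) → f 0 = 0 →
        DifferentiableOn ℂ g (Metric.ball (0 : ℂ) R) →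
        (∀ w ∈ Metric.ball (0 : ℂ) R, (∀ j, w ≠ z j) →
          g w = (1 / (k : ℂ)) * ∑ j, (f w - f (z j)) / (w - z j)) →
        ∀ w : ℂ, ‖w‖ ≤ r →
          c * ‖f w‖ ≤
            sSup ((fun u => ‖g u‖) '' Metric.closedBall (0 : ℂ) r) := by
  have hr : 0 < r := by linarith
  have : Nonempty (Fin k) := Fin.pos_iff_nonempty.1 hk
  set κ := (r - ρ) / (r + ρ) ^ 2
  set K := 1 + r * ρ / ((r - 2 * ρ) * (r - ρ))
  have hκ : 0 < κ := div_pos (by linarith) (by positivity)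
  have hK : 0 < K :=
    add_pos_of_pos_of_nonneg one_pos (div_nonneg (by positivity) (by nlinarith))
  refine ⟨κ / K, div_pos hκ hK, fun z hz f g hf hf0 hg hfg w hw => ?_⟩
  set G := sSup ((fun u => ‖g u‖) '' closedBall (0 : ℂ) r)
  have hgG : ∀ u ∈ closedBall (0 : ℂ) r, ‖g u‖ ≤ G := fun u hu =>
    le_csSup ((isCompact_closedBall 0 r).bddAbove_image
      (hg.continuousOn.mono (closedBall_subset_ball h2)).norm) ⟨u, hu, rfl⟩
  have hslope : ∀ v ∈ sphere (0 : ℂ) r, ‖𝔼 i, (f v - f (z i)) / (v - z i)‖ ≤ G := fun v hv => by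
    have hv' := mem_sphere_zero_iff_norm.1 hv
    rw [Fintype.expect_eq_sum_div_card, Fintype.card_fin, ← one_div_mul_eq_div,
      ← hfg v (mem_ball_zero_iff.2 (by linarith)) fun j h => by linarith [hz j, h ▸ hv']]
    exact hgG v (sphere_subset_closedBall hv)
  obtain ⟨a, C, ha0, ha, hfa⟩ :=
    hf.exists_hasSum_coeff_mul_pow (r := (r + R) / 2) (by linarith) (by linarith)
  have hfw : ‖f w‖ ≤ G * K / κ :=
    norm_le_of_forall_mem_sphere_norm_le hr (hf.diffContOnCl_ball (closedBall_subset_ball h2))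
      (fun u hu => (le_div_iff₀ hκ).2 <| norm_mul_le_of_norm_expect_slope_le (ha0.trans hf0) ha
        hfa hz h1 (by linarith) hslope (mem_sphere_zero_iff_norm.1 hu))
      (mem_closedBall_zero_iff.2 hw)
  calc κ / K * ‖f w‖ ≤ κ / K * (G * K / κ) := by gcongr
    _ = G := by field_simp
end

section
/- Let $0<\rho<r$, $z_1,\dots,z_k$ with $\max_i|z_i|\le\rho$, and $f$ analytic on a disk containing $\{|z|\le r\}$ with $\|f\|_r\le 1$. Then $\left\|\sum_{|I|\ge 2}\prod_{i\in I}\frac{f(\cdot)-f(z_i)}{\cdot-z_i}\right\|_r\le\left(1+\frac{2}{\rho}\right)^k\|f\|_r^2$, where the sum ranges over subsets $I\subseteq\{1,\dots,k\}$ with $|I|\ge2$. -/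
/-!
On the circle `‖w‖ = r` every factor `(f w - f zᵢ)/(w - zᵢ)` has modulus at most `2M/ρ`, because
`‖w - zᵢ‖ ≥ r - ρ > ρ`. Since `M ≤ 1`, a product over `I` with `#I ≥ 2` is at most `M² (2/ρ)^#I`,
and summing over all subsets gives `M² (1 + 2/ρ)^k` by the binomial theorem. The maximum modulus
principle carries the bound from the circle to the closed disk.
-/

open Finset Metric

lemma sum_pow_card_mul_le_sq_mul_one_add_pow {ι : Type*} (s : Finset ι) {M c : ℝ}
    (hM₀ : 0 ≤ M) (hM₁ : M ≤ 1) (hc : 0 ≤ c) :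
    ∑ I ∈ s.powerset with 2 ≤ #I, (M * c) ^ #I ≤ M ^ 2 * (1 + c) ^ #s :=
  calc ∑ I ∈ s.powerset with 2 ≤ #I, (M * c) ^ #I
      ≤ ∑ I ∈ s.powerset with 2 ≤ #I, M ^ 2 * c ^ #I := by
        refine sum_le_sum fun I hI => ?_
        rw [mul_pow]
        exact mul_le_mul_of_nonneg_right
          (pow_le_pow_of_le_one hM₀ hM₁ (mem_filter.1 hI).2) (by positivity)
    _ ≤ ∑ I ∈ s.powerset, M ^ 2 * c ^ #I :=
        sum_le_sum_of_subset_of_nonneg (filter_subset _ _) fun _ _ _ => by positivity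
    _ = M ^ 2 * (1 + c) ^ #s := by
        rw [← mul_sum, add_comm, ← sum_pow_mul_eq_add_pow]
        simp

lemma norm_sub_div_le_of_le {𝕜 : Type*} [NormedField 𝕜] {a b d : 𝕜} {M ρ : ℝ}
    (ha : ‖a‖ ≤ M) (hb : ‖b‖ ≤ M) (hρ : 0 < ρ) (hd : ρ ≤ ‖d‖) :
    ‖(a - b) / d‖ ≤ 2 * M / ρ := by
  rw [norm_div]
  refine div_le_div₀ (by linarith [norm_nonneg a]) ?_ hρ hd
  linarith [norm_sub_le a b]

lemma lt_norm_sub_of_norm_le {E : Type*} [SeminormedAddCommGroup E] {w z : E} {ρ : ℝ}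
    (hz : ‖z‖ ≤ ρ) (hw : 2 * ρ < ‖w‖) : ρ < ‖w - z‖ := by
  linarith [norm_sub_norm_le w z]

lemma norm_le_of_forall_mem_sphere_norm_le_s16 {F : Type*} [NormedAddCommGroup F] [NormedSpace ℂ F]
    {g : ℂ → F} {c : ℂ} {r R C : ℝ} (hg : DifferentiableOn ℂ g (ball c R)) (hr : 0 < r)
    (hrR : r < R) (hC : ∀ w ∈ sphere c r, ‖g w‖ ≤ C) :
    ∀ w ∈ closedBall c r, ‖g w‖ ≤ C := by
  intro w hw
  have hd : DiffContOnCl ℂ g (ball c r) := by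
    refine DifferentiableOn.diffContOnCl ?_
    rw [closure_ball c hr.ne']
    exact hg.mono (closedBall_subset_ball hrR)
  refine Complex.norm_le_of_forall_mem_frontier_norm_le isBounded_ball hd ?_ ?_
  · rwa [frontier_ball c hr.ne']
  · rwa [closure_ball c hr.ne']

theorem quadratic_bound_general (R ρ r : ℝ) (k : ℕ) (hρ : 0 < ρ)
    (h1 : 2 * ρ < r) (hrR : r < R)
    (z : Fin k → ℂ) (hz : ∀ i, ‖z i‖ ≤ ρ)
    (f : ℂ → ℂ)
    (g : ℂ → ℂ) (hg : DifferentiableOn ℂ g (Metric.ball (0 : ℂ) R))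
    (hgf : ∀ w ∈ Metric.ball (0 : ℂ) R, (∀ j, w ≠ z j) →
      g w = ∑ I ∈ Finset.univ.powerset.filter
          (fun I : Finset (Fin k) => 2 ≤ I.card),
        ∏ i ∈ I, (f w - f (z i)) / (w - z i))
    (M : ℝ) (hM : ∀ w : ℂ, ‖w‖ ≤ r → ‖f w‖ ≤ M)
    (hM1 : M ≤ 1) :
    ∀ w : ℂ, ‖w‖ ≤ r →
      ‖g w‖ ≤ (1 + 2 / ρ) ^ k * M ^ 2 := by
  have hr : 0 < r := by linarith
  have hM0 : 0 ≤ M := (norm_nonneg _).trans (hM 0 (by simpa using hr.le))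
  intro w hw
  refine norm_le_of_forall_mem_sphere_norm_le_s16 hg hr hrR (fun w hw => ?_) w (by simpa using hw)
  rw [mem_sphere_zero_iff_norm] at hw
  have hsep : ∀ i, ρ < ‖w - z i‖ := fun i => lt_norm_sub_of_norm_le (hz i) (hw ▸ h1)
  rw [hgf w (by simpa [hw] using hrR) fun j hj => by simpa [hj] using (hρ.trans (hsep j))]
  calc ‖∑ I ∈ univ.powerset with 2 ≤ #I, ∏ i ∈ I, (f w - f (z i)) / (w - z i)‖
      ≤ ∑ I ∈ univ.powerset with 2 ≤ #I, (M * (2 / ρ)) ^ #I := by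
        refine (norm_sum_le _ _).trans (sum_le_sum fun I _ => ?_)
        rw [norm_prod, ← prod_const, mul_div_left_comm, ← mul_div_assoc]
        refine prod_le_prod (fun _ _ => norm_nonneg _) fun i _ => ?_
        exact norm_sub_div_le_of_le (hM w hw.le) (hM _ (by linarith [hz i])) hρ (hsep i).le
    _ ≤ M ^ 2 * (1 + 2 / ρ) ^ #(univ : Finset (Fin k)) :=
        sum_pow_card_mul_le_sq_mul_one_add_pow _ hM0 hM1 (by positivity)
    _ = (1 + 2 / ρ) ^ k * M ^ 2 := by rw [card_univ, Fintype.card_fin, mul_comm]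

/-- Quadratic bound on the higher-order terms: with `‖f‖ᵣ ≤ 1`,
`‖∑_{|I| ≥ 2} ∏_{i ∈ I} (f z - f zᵢ)/(z - zᵢ)‖ᵣ ≤ (1 + 2/ρ)^k ‖f‖ᵣ²`.
Here `g` is the analytic extension of the sum. -/
theorem quadratic_bound (R ρ r : ℝ) (k : ℕ) (hk : 1 ≤ k) (hρ : 0 < ρ)
    (h1 : 2 * ρ < r) (hrR : r < R)
    (z : Fin k → ℂ) (hz : ∀ i, ‖z i‖ ≤ ρ)
    (f : ℂ → ℂ) (hf : DifferentiableOn ℂ f (Metric.ball (0 : ℂ) R))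
    (g : ℂ → ℂ) (hg : DifferentiableOn ℂ g (Metric.ball (0 : ℂ) R))
    (hgf : ∀ w ∈ Metric.ball (0 : ℂ) R, (∀ j, w ≠ z j) →
      g w = ∑ I ∈ Finset.univ.powerset.filter
          (fun I : Finset (Fin k) => 2 ≤ I.card),
        ∏ i ∈ I, (f w - f (z i)) / (w - z i))
    (M : ℝ) (hM : ∀ w : ℂ, ‖w‖ ≤ r → ‖f w‖ ≤ M)
    (hM1 : M ≤ 1) :
    ∀ w : ℂ, ‖w‖ ≤ r →
      ‖g w‖ ≤ (1 + 2 / ρ) ^ k * M ^ 2 :=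
  quadratic_bound_general R ρ r k hρ h1 hrR z hz f g hg hgf M hM hM1
end

section
/- Let $f$ be analytic on $\{|z|<R\}$ with $f(0)=0$, let $z_1,\dots,z_k\in\mathbb{C}$ with $\max_i|z_i|\le\rho<R$, and suppose $f(z)\cdot p'(z)=\sum_{j=1}^k f(z_j)\frac{p(z)}{z-z_j}$ for all $z$ with $|z|<R$, where $p(z)=\prod_{j=1}^k(z-z_j)$. Then $f$ is constant, hence $f\equiv0$. -/
/-!
Write `q` for the polynomial on the right-hand side, of degree at most `k - 1 = deg p'`.
By Gauss–Lucas every zero of `p'` lies in `|z| ≤ ρ`, inside the disk. Since `f` is continuous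
there, the identity `f p' = q` forces `p' ∣ q` (each zero of `p'` is a zero of `q` of at least
the same multiplicity), so the quotient is a constant `c`. Hence `f = c` on the disk, and
`f 0 = 0` gives `c = 0`.
-/

open Polynomial Set Finset Metric Topology

theorem Set.EqOn.of_eqOn_sdiff_finite {X Y : Type*} [TopologicalSpace X] [T1Space X]
    [∀ x : X, (𝓝[≠] x).NeBot] [TopologicalSpace Y] [T2Space Y] {f g : X → Y} {U S : Set X}
    (hU : IsOpen U) (hS : S.Finite) (hf : ContinuousOn f U) (hg : ContinuousOn g U)
    (h : EqOn f g (U \ S)) : EqOn f g U :=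
  h.of_subset_closure hf hg sdiff_subset <| by
    simpa [inter_univ, sdiff_eq] using (dense_univ.sdiff_finite hS).open_subset_closure_inter hU

theorem Polynomial.natDegree_eq_zero_of_natDegree_mul_le {R : Type*} [CommRing R] [IsDomain R]
    {p q : R[X]} (hp : p ≠ 0) (h : (p * q).natDegree ≤ p.natDegree) : q.natDegree = 0 := by
  rcases eq_or_ne q 0 with rfl | hq
  · exact natDegree_zero
  · rw [natDegree_mul hp hq] at h
    omega

theorem Polynomial.norm_le_of_isRoot_derivative {P : ℂ[X]} (hP : 0 < P.degree) {ρ : ℝ}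
    (hroots : ∀ x, P.IsRoot x → ‖x‖ ≤ ρ) {r : ℂ} (hr : P.derivative.IsRoot r) : ‖r‖ ≤ ρ := by
  have hsub : P.rootSet ℂ ⊆ closedBall 0 ρ := fun x hx => by
    rw [mem_rootSet] at hx
    simpa using hroots x (by simpa using hx.2)
  suffices r ∈ closedBall (0 : ℂ) ρ by simpa using this
  apply convexHull_min hsub (convex_closedBall 0 ρ)
  apply rootSet_derivative_subset_convexHull_rootSet hP
  rw [mem_rootSet]
  exact ⟨derivative_ne_zero.mpr (natDegree_pos_iff_degree_pos.mpr hP).ne', by simpa using hr⟩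

/-- Induction on `deg D`: at a zero `r` of `D` also `Q (r) = 0`, and after cancelling `X - r`
the identity persists at `r` itself by continuity. -/
theorem ContinuousOn.exists_polynomial_of_mul_eval_eq {𝕜 : Type*} [NontriviallyNormedField 𝕜]
    [IsAlgClosed 𝕜] {U : Set 𝕜} (hU : IsOpen U) {f : 𝕜 → 𝕜} (hf : ContinuousOn f U)
    {D Q : 𝕜[X]} (hD : D ≠ 0) (hroots : ∀ r, D.IsRoot r → r ∈ U)
    (h : ∀ w ∈ U, f w * D.eval w = Q.eval w) : ∃ E : 𝕜[X], Q = D * E ∧ EqOn f E.eval U := by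
  induction hn : D.natDegree generalizing D Q with
  | zero =>
    obtain ⟨a, rfl⟩ := natDegree_eq_zero.mp hn
    have ha : a ≠ 0 := by rintro rfl; exact hD C_0
    refine ⟨C a⁻¹ * Q, ?_, fun w hw => ?_⟩
    · rw [← mul_assoc, ← C_mul, mul_inv_cancel₀ ha, C_1, one_mul]
    · simp only [eval_mul, eval_C, ← h w hw]
      field_simp
  | succ n ih =>
    obtain ⟨r, hr⟩ := IsAlgClosed.exists_root D <| by
      rw [degree_eq_natDegree hD, hn]
      exact_mod_cast n.succ_ne_zero
    have hQr : Q.IsRoot r := by rw [IsRoot, ← h r (hroots r hr), hr.eq_zero, mul_zero]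
    set D' := D /ₘ (X - C r)
    set Q' := Q /ₘ (X - C r)
    have hDfac : (X - C r) * D' = D := mul_divByMonic_eq_iff_isRoot.mpr hr
    have hQfac : (X - C r) * Q' = Q := mul_divByMonic_eq_iff_isRoot.mpr hQr
    have hD' : D' ≠ 0 := by
      rintro h0
      rw [h0, mul_zero] at hDfac
      exact hD hDfac.symm
    have hn' : D'.natDegree = n := by
      have := natDegree_mul (X_sub_C_ne_zero r) hD'
      rw [hDfac, hn, natDegree_X_sub_C] at this
      omega
    have h' : EqOn (fun w => f w * D'.eval w) Q'.eval U := by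
      refine EqOn.of_eqOn_sdiff_finite hU (finite_singleton r)
        (hf.mul D'.continuous.continuousOn) Q'.continuous.continuousOn fun w ⟨hw, hwr⟩ => ?_
      have hwr : w - r ≠ 0 := sub_ne_zero.mpr hwr
      have := h w hw
      rw [← hDfac, ← hQfac] at this
      simp only [eval_mul, eval_sub, eval_X, eval_C] at this
      exact mul_left_cancel₀ hwr (by linear_combination this)
    obtain ⟨E, hQE, hfE⟩ :=
      ih hD' (fun s hs => hroots s (by rw [← hDfac, IsRoot, eval_mul, hs.eq_zero, mul_zero])) h' hn'
    exact ⟨E, by rw [← hQfac, hQE, ← hDfac, mul_assoc], hfE⟩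

/-- If `f` is analytic on the disk, `f 0 = 0`, and
`f(z) p'(z) = ∑ⱼ f(zⱼ) p(z)/(z - zⱼ)` on the disk, then `f ≡ 0`. -/
theorem f_vanishes (R ρ : ℝ) (k : ℕ) (hk : 1 ≤ k) (hρR : ρ < R)
    (z : Fin k → ℂ) (hz : ∀ i, ‖z i‖ ≤ ρ)
    (f : ℂ → ℂ) (hf : DifferentiableOn ℂ f (Metric.ball (0 : ℂ) R))
    (hf0 : f 0 = 0)
    (heq : ∀ w ∈ Metric.ball (0 : ℂ) R,
      f w * (Polynomial.derivative
          (∏ j, (Polynomial.X - Polynomial.C (z j)))).eval w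
        = ∑ j, f (z j) * ∏ i ∈ Finset.univ.erase j, (w - z i)) :
    ∀ w ∈ Metric.ball (0 : ℂ) R, f w = 0 := by
  set P : ℂ[X] := ∏ j, (X - C (z j))
  set Q : ℂ[X] := ∑ j, C (f (z j)) * ∏ i ∈ univ.erase j, (X - C (z i))
  have hP : P.natDegree = k := by simp [P]
  have hD : derivative P ≠ 0 := derivative_ne_zero.mpr (by omega)
  have hQ : Q.natDegree ≤ (derivative P).natDegree := by
    rw [natDegree_derivative, hP]
    refine natDegree_sum_le_of_forall_le _ _ fun j _ => natDegree_C_mul_le _ _ |>.trans ?_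
    simp
  have hroots (r : ℂ) (hr : (derivative P).IsRoot r) : r ∈ ball (0 : ℂ) R := by
    have hPr (x : ℂ) (hx : P.IsRoot x) : ‖x‖ ≤ ρ := by
      obtain ⟨j, -, hj⟩ := prod_eq_zero_iff.mp (by simpa [P, eval_prod] using hx)
      exact sub_eq_zero.mp hj ▸ hz j
    exact mem_ball_zero_iff.mpr <|
      (norm_le_of_isRoot_derivative (natDegree_pos_iff_degree_pos.mp (by omega)) hPr hr).trans_lt hρR
  have hfQ (w : ℂ) (hw : w ∈ ball (0 : ℂ) R) : f w * (derivative P).eval w = Q.eval w := by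
    simp [heq w hw, Q, eval_finsetSum, eval_prod]
  obtain ⟨E, hQE, hfE⟩ := hf.continuousOn.exists_polynomial_of_mul_eval_eq isOpen_ball hD hroots hfQ
  obtain ⟨c, rfl⟩ := natDegree_eq_zero.mp (natDegree_eq_zero_of_natDegree_mul_le hD (hQE ▸ hQ))
  have h0 : (0 : ℂ) ∈ ball (0 : ℂ) R :=
    mem_ball_self <| ((norm_nonneg _).trans (hz ⟨0, hk⟩)).trans_lt hρR
  have hc : c = 0 := by simpa [hf0] using (hfE h0).symm
  intro w hw
  simpa [hc] using hfE hw
end
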